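/- arXiv:2305.02987 — 11 statements merged into one kernel-verified Lean document; each statement's English description precedes it below -/
import Mathlib

section
/- Let f : 2^V → ℝ≥0 be a monotone non-negative submodular set function, and suppose S₁, S₂ ⊊ V are both minimizers of the ratio (|V| - |S|)/(f(V) - f(S)) with minimum value λ. Then S₁ ∩ S₂ is also a minimizer, i.e., (|V| - |S₁ ∩ S₂|)/(f(V) - f(S₁ ∩ S₂)) = λ. -/
/-!
For a fixed `λ ≥ 0`, the excess `(|V| - |S|) - λ (f V - f S)` is submodular, being a modular
function plus `λ f` up to a constant. The minimizers of the ratio with value `λ` are exactly the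
proper zeros of this excess, which is non-negative everywhere since `λ` is the minimum. Applying
submodularity to two zeros `S₁`, `S₂` gives `excess (S₁ ∪ S₂) + excess (S₁ ∩ S₂) ≤ 0`, so both
terms vanish.
-/

open Finset

theorem inf_eq_zero_of_submodular {α : Type*} [Lattice α] {φ : α → ℝ}
    (hφ : ∀ a b, φ (a ⊔ b) + φ (a ⊓ b) ≤ φ a + φ b) (hnn : ∀ a, 0 ≤ φ a) {a b : α}
    (ha : φ a = 0) (hb : φ b = 0) : φ (a ⊓ b) = 0 := by
  linarith [hφ a b, hnn (a ⊔ b), hnn (a ⊓ b)]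

section RatioExcess

variable {V : Type*} [Fintype V]

def ratioExcess (f : Finset V → ℝ) (lam : ℝ) (S : Finset V) : ℝ :=
  ((univ : Finset V).card - S.card) - lam * (f univ - f S)

theorem ratioExcess_submodular [DecidableEq V] {f : Finset V → ℝ}
    (hsub : ∀ A B : Finset V, f (A ∪ B) + f (A ∩ B) ≤ f A + f B) {lam : ℝ} (hlam : 0 ≤ lam)
    (A B : Finset V) :
    ratioExcess f lam (A ∪ B) + ratioExcess f lam (A ∩ B) ≤
      ratioExcess f lam A + ratioExcess f lam B := by
  have hcard : ((A ∪ B).card : ℝ) + (A ∩ B).card = A.card + B.card := by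
    exact_mod_cast card_union_add_card_inter A B
  have := mul_le_mul_of_nonneg_left (hsub A B) hlam
  simp only [ratioExcess]
  linarith

theorem le_ratio_iff_ratioExcess_nonneg {f : Finset V → ℝ} {S : Finset V}
    (hS : 0 < f univ - f S) (lam : ℝ) :
    lam ≤ ((univ : Finset V).card - S.card) / (f univ - f S) ↔ 0 ≤ ratioExcess f lam S := by
  rw [le_div_iff₀ hS, ratioExcess, sub_nonneg]

theorem ratio_eq_iff_ratioExcess_eq_zero {f : Finset V → ℝ} {S : Finset V}
    (hS : 0 < f univ - f S) (lam : ℝ) :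
    ((univ : Finset V).card - S.card) / (f univ - f S) = lam ↔ ratioExcess f lam S = 0 := by
  rw [div_eq_iff hS.ne', ratioExcess, sub_eq_zero]

end RatioExcess

theorem stmt4_general {V : Type*} [Fintype V] [DecidableEq V]
    (f : Finset V → ℝ)
    (hsub : ∀ A B : Finset V, f (A ∪ B) + f (A ∩ B) ≤ f A + f B)
    (hwd : ∀ S : Finset V, S ⊂ univ → 0 < f univ - f S)
    (lam : ℝ)
    (S₁ S₂ : Finset V) (h1 : S₁ ⊂ univ) (h2 : S₂ ⊂ univ)
    (hmin : ∀ T : Finset V, T ⊂ univ →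
      lam ≤ (((univ : Finset V).card : ℝ) - T.card) / (f univ - f T))
    (hd1 : (((univ : Finset V).card : ℝ) - S₁.card) / (f univ - f S₁) = lam)
    (hd2 : (((univ : Finset V).card : ℝ) - S₂.card) / (f univ - f S₂) = lam) :
    (((univ : Finset V).card : ℝ) - (S₁ ∩ S₂).card) / (f univ - f (S₁ ∩ S₂)) = lam := by
  have hlam : 0 ≤ lam :=
    hd1 ▸ div_nonneg (sub_nonneg.2 (by exact_mod_cast card_le_univ S₁)) (hwd S₁ h1).le
  have hnonneg (S : Finset V) : 0 ≤ ratioExcess f lam S := by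
    rcases (subset_univ S).eq_or_ssubset with rfl | hS
    · simp [ratioExcess]
    · exact (le_ratio_iff_ratioExcess_nonneg (hwd S hS) lam).1 (hmin S hS)
  rw [ratio_eq_iff_ratioExcess_eq_zero (hwd _ (inter_subset_left.trans_ssubset h1))]
  exact inf_eq_zero_of_submodular (ratioExcess_submodular hsub hlam) hnonneg
    ((ratio_eq_iff_ratioExcess_eq_zero (hwd S₁ h1) lam).1 hd1)
    ((ratio_eq_iff_ratioExcess_eq_zero (hwd S₂ h2) lam).1 hd2)

/-- For a monotone non-negative submodular function, the intersection of two
minimizers of `(|V|-|S|)/(f(V)-f(S))` is also a minimizer. -/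
theorem stmt4 {V : Type*} [Fintype V] [DecidableEq V]
    (f : Finset V → ℝ) (hnn : ∀ S : Finset V, 0 ≤ f S)
    (hmono : ∀ A B : Finset V, A ⊆ B → f A ≤ f B)
    (hsub : ∀ A B : Finset V, f (A ∪ B) + f (A ∩ B) ≤ f A + f B)
    (hwd : ∀ S : Finset V, S ⊂ univ → 0 < f univ - f S)
    (lam : ℝ)
    (S₁ S₂ : Finset V) (h1 : S₁ ⊂ univ) (h2 : S₂ ⊂ univ)
    (hmin : ∀ T : Finset V, T ⊂ univ →
      lam ≤ (((univ : Finset V).card : ℝ) - T.card) / (f univ - f T))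
    (hd1 : (((univ : Finset V).card : ℝ) - S₁.card) / (f univ - f S₁) = lam)
    (hd2 : (((univ : Finset V).card : ℝ) - S₂.card) / (f univ - f S₂) = lam) :
    (((univ : Finset V).card : ℝ) - (S₁ ∩ S₂).card) / (f univ - f (S₁ ∩ S₂)) = lam :=
  stmt4_general f hsub hwd lam S₁ S₂ h1 h2 hmin hd1 hd2
end

section
/- Let D ⊆ ℝ^d be a compact convex set and f : D → ℝ a convex differentiable function with curvature constant C_f and minimizer b*. Consider the noisy Frank-Wolfe iteration: b^{(k+1)} = (1 - γ_k) b^{(k)} + γ_k d^{(k+1)} with step size γ_k = 1/(k+1), where d^{(k+1)} ∈ D satisfies ⟨d^{(k+1)}, ∇f(b^{(k)})⟩ ≤ min_{s ∈ D} ⟨s, ∇f(b^{(k)})⟩ + δ C_f/(k+2) for a fixed δ > 0. Then for all k ≥ 1, f(b^{(k)}) - f(b*) ≤ 2 C_f (1 + δ) H_{k+1}/(k+1), where H_n = Σ_{i=1}^n 1/i. -/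
/-!
Write `h k = f (b k) - f b*` and `γ = 1 / (k + 1)`. The curvature bound, the first-order
characterisation of convexity and the oracle inequality give
`h (k + 1) ≤ (1 - γ) h k + γ δ C / (k + 2) + C γ² / 2`. Multiplied by `k + 1` this becomes
`(k + 1) h (k + 1) ≤ k h k + C (1 + δ) / (k + 1)`, which telescopes to `k h k ≤ C (1 + δ) H_k`.
-/

open Finset RealInnerProductSpace

variable {E : Type*} [NormedAddCommGroup E] [InnerProductSpace ℝ E]

def IsCurvatureBound (D : Set E) (f : E → ℝ) (f' : E → E) (C : ℝ) : Prop :=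
  ∀ x ∈ D, ∀ s ∈ D, ∀ γ : ℝ, 0 < γ → γ ≤ 1 →
    (2 / γ ^ 2) * (f (x + γ • (s - x)) - f x - ⟪γ • (s - x), f' x⟫) ≤ C

namespace IsCurvatureBound

variable {D : Set E} {f : E → ℝ} {f' : E → E} {C : ℝ}

theorem nonneg (hC : IsCurvatureBound D f f' C) {x : E} (hx : x ∈ D) : 0 ≤ C := by
  simpa using hC x hx x hx 1 one_pos le_rfl

theorem le_add_inner (hC : IsCurvatureBound D f f' C) {x s : E} (hx : x ∈ D) (hs : s ∈ D)
    {γ : ℝ} (hγ0 : 0 < γ) (hγ1 : γ ≤ 1) :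
    f (x + γ • (s - x)) ≤ f x + γ * ⟪s - x, f' x⟫ + C * γ ^ 2 / 2 := by
  have h := hC x hx s hs γ hγ0 hγ1
  rw [real_inner_smul_left, div_mul_eq_mul_div, div_le_iff₀ (by positivity)] at h
  linarith

end IsCurvatureBound

theorem frankWolfe_mem {D : Set E} {b dir : ℕ → E} (hD : Convex ℝ D) (hb0 : b 0 ∈ D)
    (hdir : ∀ k : ℕ, dir (k + 1) ∈ D)
    (hupd : ∀ k : ℕ,
      b (k + 1) = (1 - 1 / ((k : ℝ) + 1)) • b k + (1 / ((k : ℝ) + 1)) • dir (k + 1))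
    (k : ℕ) : b k ∈ D := by
  induction k with
  | zero => exact hb0
  | succ k ih =>
    have hγ : 1 / ((k : ℝ) + 1) ≤ 1 := by
      rw [div_le_one (by positivity)]
      linarith [k.cast_nonneg (α := ℝ)]
    rw [hupd k]
    exact hD ih (hdir k) (by linarith) (by positivity) (by ring)

variable [CompleteSpace E]

theorem ConvexOn.inner_sub_le_sub_of_hasGradientAt {D : Set E} {f : E → ℝ} {g x y : E}
    (hf : ConvexOn ℝ D f) (hx : x ∈ D) (hy : y ∈ D) (hg : HasGradientAt f g x) :
    ⟪y - x, g⟫ ≤ f y - f x := by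
  let φ : ℝ →ᵃ[ℝ] E := AffineMap.lineMap x y
  have hline : ConvexOn ℝ (Set.Icc 0 1) (f ∘ φ) :=
    (hf.comp_affineMap φ).subset (fun _ ht ↦ hf.1.lineMap_mem hx hy ht) (convex_Icc 0 1)
  have hderiv : HasDerivAt (f ∘ φ) ⟪y - x, g⟫ 0 := by
    have hfx := hg.hasFDerivAt
    rw [← AffineMap.lineMap_apply_zero (k := ℝ) x y] at hfx
    simpa [real_inner_comm] using hfx.comp_hasDerivAt (0 : ℝ) AffineMap.hasDerivAt_lineMap
  simpa [slope, φ] using hline.le_slope_of_hasDerivAt (Set.left_mem_Icc.2 zero_le_one)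
    (Set.right_mem_Icc.2 zero_le_one) zero_lt_one hderiv

theorem ConvexOn.frankWolfe_step_sub_le {D : Set E} {f : E → ℝ} {f' : E → E} {C : ℝ}
    (hconv : ConvexOn ℝ D f) (hC : IsCurvatureBound D f f' C) {x s y : E} (hx : x ∈ D)
    (hs : s ∈ D) (hy : y ∈ D) (hg : HasGradientAt f (f' x) x) {γ ε : ℝ} (hγ0 : 0 < γ)
    (hγ1 : γ ≤ 1) (hs_min : ⟪s, f' x⟫ ≤ ⟪y, f' x⟫ + ε) :
    f (x + γ • (s - x)) - f y ≤ (1 - γ) * (f x - f y) + γ * ε + C * γ ^ 2 / 2 := by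
  have hcurv := hC.le_add_inner hx hs hγ0 hγ1
  have hfirst := hconv.inner_sub_le_sub_of_hasGradientAt hx hy hg
  have hlin : ⟪s - x, f' x⟫ ≤ f y - f x + ε := by
    rw [inner_sub_left] at hfirst ⊢
    linarith
  nlinarith [mul_le_mul_of_nonneg_left hlin hγ0.le]

section FrankWolfe

variable {D : Set E} {f : E → ℝ} {f' : E → E} {C δ : ℝ} {b dir : ℕ → E}
  (hD : Convex ℝ D) (hconv : ConvexOn ℝ D f) (hgrad : ∀ x ∈ D, HasGradientAt f (f' x) x)
  (hC : IsCurvatureBound D f f' C) {y : E} (hy : y ∈ D) (hδ : 0 ≤ δ) (hb0 : b 0 ∈ D)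
  (hdir : ∀ k : ℕ, dir (k + 1) ∈ D)
  (happrox : ∀ k : ℕ, ∀ s ∈ D, ⟪dir (k + 1), f' (b k)⟫ ≤ ⟪s, f' (b k)⟫ + δ * C / (k + 2))
  (hupd : ∀ k : ℕ,
    b (k + 1) = (1 - 1 / ((k : ℝ) + 1)) • b k + (1 / ((k : ℝ) + 1)) • dir (k + 1))
include hD hconv hgrad hC hy hδ hb0 hdir happrox hupd

theorem frankWolfe_succ_mul_sub_le (k : ℕ) :
    (k + 1) * (f (b (k + 1)) - f y) ≤ k * (f (b k) - f y) + C * (1 + δ) / (k + 1) := by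
  have hbk := frankWolfe_mem hD hb0 hdir hupd k
  have hk : (0 : ℝ) < k + 1 := by positivity
  have hγ1 : 1 / ((k : ℝ) + 1) ≤ 1 := by rw [div_le_one hk]; linarith
  have hstep := hconv.frankWolfe_step_sub_le hC hbk (hdir k) hy (hgrad _ hbk)
    (by positivity) hγ1 (happrox k y hy)
  have hnext : b k + (1 / ((k : ℝ) + 1)) • (dir (k + 1) - b k) = b (k + 1) := by
    rw [hupd k]; module
  rw [hnext] at hstep
  have hC0 := hC.nonneg hy
  have hδC : δ * C / (k + 2) ≤ δ * C / (k + 1) :=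
    div_le_div_of_nonneg_left (by positivity) hk (by linarith)
  have hhalf : C / 2 / (k + 1) ≤ C / (k + 1) := by gcongr; linarith
  calc (k + 1) * (f (b (k + 1)) - f y)
      ≤ (k + 1) * ((1 - 1 / (k + 1)) * (f (b k) - f y) + 1 / (k + 1) * (δ * C / (k + 2))
          + C * (1 / (k + 1)) ^ 2 / 2) := mul_le_mul_of_nonneg_left hstep hk.le
    _ = k * (f (b k) - f y) + δ * C / (k + 2) + C / 2 / (k + 1) := by field_simp; ring
    _ ≤ k * (f (b k) - f y) + C * (1 + δ) / (k + 1) := by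
        rw [mul_add, mul_one, add_div, mul_comm C δ]
        linarith

theorem frankWolfe_mul_sub_le (k : ℕ) :
    k * (f (b k) - f y) ≤ C * (1 + δ) * ∑ i ∈ range k, 1 / ((i : ℝ) + 1) := by
  induction k with
  | zero => simp
  | succ k ih =>
    have hstep := frankWolfe_succ_mul_sub_le hD hconv hgrad hC hy hδ hb0 hdir happrox hupd k
    rw [sum_range_succ, mul_add, ← mul_div_assoc, mul_one]
    push_cast
    linarith

end FrankWolfe

theorem stmt5_general {d : ℕ} (D : Set (EuclideanSpace ℝ (Fin d)))
    (hDconv : Convex ℝ D)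
    (f : EuclideanSpace ℝ (Fin d) → ℝ)
    (f' : EuclideanSpace ℝ (Fin d) → EuclideanSpace ℝ (Fin d))
    (hconv : ConvexOn ℝ D f)
    (hgrad : ∀ x ∈ D, HasGradientAt f (f' x) x)
    (C : ℝ)
    -- `C` is the curvature constant of `f` on `D`
    (hC : ∀ x ∈ D, ∀ s ∈ D, ∀ γ : ℝ, 0 < γ → γ ≤ 1 →
      (2 / γ ^ 2) * (f (x + γ • (s - x)) - f x -
        (inner ℝ (γ • (s - x)) (f' x) : ℝ)) ≤ C)
    (bstar : EuclideanSpace ℝ (Fin d)) (hbstar : bstar ∈ D)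
    (δ : ℝ) (hδ : 0 < δ)
    (b dir : ℕ → EuclideanSpace ℝ (Fin d))
    (hb0 : b 0 ∈ D)
    (hdir : ∀ k : ℕ, dir (k + 1) ∈ D)
    -- approximate linear minimization oracle
    (happrox : ∀ k : ℕ, ∀ s ∈ D,
      (inner ℝ (dir (k + 1)) (f' (b k)) : ℝ) ≤
        (inner ℝ s (f' (b k)) : ℝ) + δ * C / (k + 2))
    -- Frank-Wolfe update with step size `γ_k = 1/(k+1)`
    (hupd : ∀ k : ℕ,
      b (k + 1) = (1 - 1 / ((k : ℝ) + 1)) • b k + (1 / ((k : ℝ) + 1)) • dir (k + 1)) :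
    ∀ k : ℕ, 1 ≤ k →
      f (b k) - f bstar ≤
        2 * C * (1 + δ) * (∑ i ∈ Finset.range (k + 1), (1 : ℝ) / (i + 1)) / (k + 1) := by
  intro k hk
  have hbound := frankWolfe_mul_sub_le hDconv hconv hgrad hC hbstar hδ.le hb0 hdir happrox hupd k
  have hk1 : (1 : ℝ) ≤ k := by exact_mod_cast hk
  set H := ∑ i ∈ range k, 1 / ((i : ℝ) + 1)
  have hH : 0 ≤ H := sum_nonneg fun i _ ↦ by positivity
  have hC0 := IsCurvatureBound.nonneg hC hbstar
  rw [sum_range_succ]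
  calc f (b k) - f bstar ≤ C * (1 + δ) * H / k := by rw [le_div_iff₀ (by linarith)]; linarith
    _ ≤ 2 * C * (1 + δ) * H / (k + 1) := by
        rw [div_le_div_iff₀ (by linarith) (by linarith)]
        nlinarith [mul_nonneg (mul_nonneg hC0 (by linarith : 0 ≤ 1 + δ)) hH]
    _ ≤ 2 * C * (1 + δ) * (H + 1 / ((k : ℝ) + 1)) / (k + 1) := by
        gcongr
        exact le_add_of_nonneg_right (by positivity)

/-- Convergence of the noisy Frank-Wolfe method with step size `1/(k+1)` and a
`δ C_f/(k+2)`-approximate linear minimization oracle. -/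
theorem stmt5 {d : ℕ} (D : Set (EuclideanSpace ℝ (Fin d)))
    (hDc : IsCompact D) (hDconv : Convex ℝ D)
    (f : EuclideanSpace ℝ (Fin d) → ℝ)
    (f' : EuclideanSpace ℝ (Fin d) → EuclideanSpace ℝ (Fin d))
    (hconv : ConvexOn ℝ D f)
    (hgrad : ∀ x ∈ D, HasGradientAt f (f' x) x)
    (C : ℝ)
    -- `C` is the curvature constant of `f` on `D`
    (hC : ∀ x ∈ D, ∀ s ∈ D, ∀ γ : ℝ, 0 < γ → γ ≤ 1 →
      (2 / γ ^ 2) * (f (x + γ • (s - x)) - f x -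
        (inner ℝ (γ • (s - x)) (f' x) : ℝ)) ≤ C)
    (bstar : EuclideanSpace ℝ (Fin d)) (hbstar : bstar ∈ D)
    (hmin : ∀ x ∈ D, f bstar ≤ f x)
    (δ : ℝ) (hδ : 0 < δ)
    (b dir : ℕ → EuclideanSpace ℝ (Fin d))
    (hb0 : b 0 ∈ D)
    (hdir : ∀ k : ℕ, dir (k + 1) ∈ D)
    -- approximate linear minimization oracle
    (happrox : ∀ k : ℕ, ∀ s ∈ D,
      (inner ℝ (dir (k + 1)) (f' (b k)) : ℝ) ≤
        (inner ℝ s (f' (b k)) : ℝ) + δ * C / (k + 2))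
    -- Frank-Wolfe update with step size `γ_k = 1/(k+1)`
    (hupd : ∀ k : ℕ,
      b (k + 1) = (1 - 1 / ((k : ℝ) + 1)) • b k + (1 / ((k : ℝ) + 1)) • dir (k + 1)) :
    ∀ k : ℕ, 1 ≤ k →
      f (b k) - f bstar ≤
        2 * C * (1 + δ) * (∑ i ∈ Finset.range (k + 1), (1 : ℝ) / (i + 1)) / (k + 1) :=
  stmt5_general D hDconv f f' hconv hgrad C hC bstar hbstar δ hδ b dir hb0 hdir happrox hupd
end

section
/- Let D ⊆ ℝ^d be compact convex and f : D → ℝ convex and differentiable such that ∇f is Lipschitz with constant L. Then the curvature constant C_f satisfies C_f ≤ L · diam(D)², where diam(D) = max_{x,y ∈ D} ‖x - y‖₂. -/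
/-!
Along the segment from `x` to `y = x + γ (s - x)`, Cauchy–Schwarz and the Lipschitz bound on `∇f`
show that the directional derivative `⟪∇f (x + t (y - x)), y - x⟫` exceeds `⟪∇f x, y - x⟫` by at
most `L t ‖y - x‖²`. Integrating over `t ∈ [0, 1]` gives the descent lemma
`f y - f x - ⟪y - x, ∇f x⟫ ≤ L / 2 ‖y - x‖²`, and `‖y - x‖ = γ ‖s - x‖ ≤ γ diam D` turns it into
the bound on the curvature constant.
-/

open InnerProductSpace Set Metric

section Descent

variable {E : Type*} [NormedAddCommGroup E] [InnerProductSpace ℝ E] [CompleteSpace E]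

theorem HasGradientAt.hasDerivAt_add_smul {f : E → ℝ} {g x v : E} {t : ℝ}
    (hf : HasGradientAt f g (x + t • v)) :
    HasDerivAt (fun t : ℝ => f (x + t • v)) ⟪g, v⟫_ℝ t := by
  have hline : HasDerivAt (fun t : ℝ => x + t • v) v t := by
    simpa using ((hasDerivAt_id t).smul_const v).const_add x
  simpa [Function.comp_def] using hf.hasFDerivAt.comp_hasDerivAt t hline

theorem Convex.sub_sub_inner_le_of_lipschitz_gradient {D : Set E} (hD : Convex ℝ D)
    {f : E → ℝ} {f' : E → E} (hgrad : ∀ x ∈ D, HasGradientAt f (f' x) x) {L : ℝ}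
    (hL : ∀ x ∈ D, ∀ y ∈ D, ‖f' x - f' y‖ ≤ L * ‖x - y‖) {x y : E} (hx : x ∈ D) (hy : y ∈ D) :
    f y - f x - ⟪y - x, f' x⟫_ℝ ≤ L / 2 * ‖y - x‖ ^ 2 := by
  set v := y - x
  have hseg : ∀ t ∈ Icc (0 : ℝ) 1, x + t • v ∈ D := fun t ht => hD.add_smul_sub_mem hx hy ht
  -- `φ` is the gap between the quadratic upper model of `f` at `x` and `f`, along the segment.
  set φ : ℝ → ℝ := fun t => L / 2 * t ^ 2 * ‖v‖ ^ 2 + t * ⟪f' x, v⟫_ℝ - f (x + t • v)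
  set φ' : ℝ → ℝ := fun t => L * t * ‖v‖ ^ 2 + ⟪f' x, v⟫_ℝ - ⟪f' (x + t • v), v⟫_ℝ
  have hφ : ∀ t ∈ Icc (0 : ℝ) 1, HasDerivAt φ (φ' t) t := by
    intro t ht
    have hquad : HasDerivAt (fun t : ℝ => L / 2 * t ^ 2 * ‖v‖ ^ 2 + t * ⟪f' x, v⟫_ℝ)
        (L * t * ‖v‖ ^ 2 + ⟪f' x, v⟫_ℝ) t := by
      refine ((((hasDerivAt_pow 2 t).const_mul (L / 2)).mul_const (‖v‖ ^ 2)).add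
        ((hasDerivAt_id t).mul_const ⟪f' x, v⟫_ℝ)).congr_deriv ?_
      simp only [Nat.cast_ofNat]
      ring
    exact hquad.sub (hgrad _ (hseg t ht)).hasDerivAt_add_smul
  have hφ'_nonneg : ∀ t ∈ Icc (0 : ℝ) 1, 0 ≤ φ' t := by
    intro t ht
    have hLip : ‖f' (x + t • v) - f' x‖ ≤ L * (t * ‖v‖) := by
      simpa [norm_smul, abs_of_nonneg ht.1] using hL _ (hseg t ht) x hx
    have hinner : ⟪f' (x + t • v), v⟫_ℝ - ⟪f' x, v⟫_ℝ ≤ L * t * ‖v‖ ^ 2 :=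
      calc ⟪f' (x + t • v), v⟫_ℝ - ⟪f' x, v⟫_ℝ = ⟪f' (x + t • v) - f' x, v⟫_ℝ :=
            (inner_sub_left _ _ _).symm
        _ ≤ ‖f' (x + t • v) - f' x‖ * ‖v‖ := real_inner_le_norm _ _
        _ ≤ L * (t * ‖v‖) * ‖v‖ := by gcongr
        _ = L * t * ‖v‖ ^ 2 := by ring
    simp only [φ']
    linarith
  have hmono : MonotoneOn φ (Icc 0 1) := by
    refine monotoneOn_of_hasDerivWithinAt_nonneg (convex_Icc 0 1)
      (fun t ht => (hφ t ht).continuousAt.continuousWithinAt)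
      (fun t ht => (hφ t (interior_subset ht)).hasDerivWithinAt)
      (fun t ht => hφ'_nonneg t (interior_subset ht))
  have h01 := hmono (left_mem_Icc.2 zero_le_one) (right_mem_Icc.2 zero_le_one) zero_le_one
  simp only [φ, v, zero_smul, add_zero, one_smul, add_sub_cancel] at h01
  rw [real_inner_comm]
  linarith

end Descent

theorem nonneg_or_subsingleton_of_norm_sub_le_mul {E F : Type*} [NormedAddCommGroup E]
    [NormedAddCommGroup F] {D : Set E} {g : E → F} {L : ℝ}
    (hL : ∀ x ∈ D, ∀ y ∈ D, ‖g x - g y‖ ≤ L * ‖x - y‖) : 0 ≤ L ∨ D.Subsingleton := by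
  refine or_iff_not_imp_right.2 fun hD => ?_
  obtain ⟨x, hx, y, hy, hxy⟩ := Set.not_subsingleton_iff.1 hD
  have hpos : 0 < ‖x - y‖ := norm_pos_iff.2 (sub_ne_zero.2 hxy)
  nlinarith [hL x hx y hy, norm_nonneg (g x - g y)]

theorem mul_norm_sub_sq_le_mul_diam_sq {E : Type*} [NormedAddCommGroup E] {D : Set E}
    (hD : Bornology.IsBounded D) {L : ℝ} (hL : 0 ≤ L ∨ D.Subsingleton) {x y : E} (hx : x ∈ D)
    (hy : y ∈ D) : L * ‖y - x‖ ^ 2 ≤ L * diam D ^ 2 := by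
  rcases hL with hL | hD
  · rw [← dist_eq_norm]
    gcongr
    exact dist_le_diam_of_mem hD hy hx
  · simp [hD hy hx, diam_subsingleton hD]

theorem stmt6_general {d : ℕ} (D : Set (EuclideanSpace ℝ (Fin d)))
    (hDc : IsCompact D) (hDconv : Convex ℝ D)
    (f : EuclideanSpace ℝ (Fin d) → ℝ)
    (f' : EuclideanSpace ℝ (Fin d) → EuclideanSpace ℝ (Fin d))
    (hgrad : ∀ x ∈ D, HasGradientAt f (f' x) x)
    (L : ℝ)
    (hL : ∀ x ∈ D, ∀ y ∈ D, ‖f' x - f' y‖ ≤ L * ‖x - y‖) :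
    ∀ x ∈ D, ∀ s ∈ D, ∀ γ : ℝ, 0 < γ → γ ≤ 1 →
      (2 / γ ^ 2) * (f (x + γ • (s - x)) - f x -
        (inner ℝ (γ • (s - x)) (f' x) : ℝ)) ≤ L * (Metric.diam D) ^ 2 := by
  intro x hx s hs γ hγ0 hγ1
  have hy : x + γ • (s - x) ∈ D := hDconv.add_smul_sub_mem hx hs ⟨hγ0.le, hγ1⟩
  have hdescent := hDconv.sub_sub_inner_le_of_lipschitz_gradient hgrad hL hx hy
  rw [add_sub_cancel_left] at hdescent
  calc (2 / γ ^ 2) * (f (x + γ • (s - x)) - f x - ⟪γ • (s - x), f' x⟫_ℝ)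
      ≤ (2 / γ ^ 2) * (L / 2 * ‖γ • (s - x)‖ ^ 2) := by gcongr
    _ = L * ‖s - x‖ ^ 2 := by
      rw [norm_smul, Real.norm_of_nonneg hγ0.le]
      field_simp
    _ ≤ L * diam D ^ 2 :=
      mul_norm_sub_sq_le_mul_diam_sq hDc.isBounded (nonneg_or_subsingleton_of_norm_sub_le_mul hL)
        hx hs

/-- The curvature constant is bounded by `L · diam(D)²` when the gradient of
`f` is `L`-Lipschitz on `D`. -/
theorem stmt6 {d : ℕ} (D : Set (EuclideanSpace ℝ (Fin d)))
    (hDc : IsCompact D) (hDconv : Convex ℝ D)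
    (f : EuclideanSpace ℝ (Fin d) → ℝ)
    (f' : EuclideanSpace ℝ (Fin d) → EuclideanSpace ℝ (Fin d))
    (hconv : ConvexOn ℝ D f)
    (hgrad : ∀ x ∈ D, HasGradientAt f (f' x) x)
    (L : ℝ)
    (hL : ∀ x ∈ D, ∀ y ∈ D, ‖f' x - f' y‖ ≤ L * ‖x - y‖) :
    ∀ x ∈ D, ∀ s ∈ D, ∀ γ : ℝ, 0 < γ → γ ≤ 1 →
      (2 / γ ^ 2) * (f (x + γ • (s - x)) - f x -
        (inner ℝ (γ • (s - x)) (f' x) : ℝ)) ≤ L * (Metric.diam D) ^ 2 :=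
  stmt6_general D hDc hDconv f f' hgrad L hL
end

section
/- Suppose a sequence of nonnegative reals ε_k satisfies ε_{k+1} ≤ (1 - 1/(k+1)) ε_k + C/(k+1)² for all k ≥ 0, for some constant C > 0. Then ε_k ≤ 4 C H_{k+1}/(k+1) for all k ≥ 1, where H_n is the n-th harmonic number. -/
/-!
Multiplying the recurrence by `k + 1` makes it telescope: `u k = k ε_k` satisfies
`u (k + 1) ≤ u k + C / (k + 1)` and `u 0 = 0`, so `k ε_k ≤ C H_k`. The claimed bound is weaker,
since `H_k ≤ H_{k+1}` and `1 / k ≤ 2 / (k + 1)` for `k ≥ 1`.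
-/

open Finset

theorem natCast_mul_le_mul_sum_of_le_rec (ε : ℕ → ℝ) (C : ℝ)
    (hrec : ∀ k : ℕ, ε (k + 1) ≤ (1 - 1 / ((k : ℝ) + 1)) * ε k + C / ((k : ℝ) + 1) ^ 2)
    (k : ℕ) : k * ε k ≤ C * ∑ i ∈ range k, (1 : ℝ) / (i + 1) := by
  induction k with
  | zero => simp
  | succ k ih =>
    have hk : (0 : ℝ) < k + 1 := by positivity
    have hstep : ((k + 1 : ℕ) : ℝ) * ε (k + 1) ≤ k * ε k + C / (k + 1) := by
      calc ((k + 1 : ℕ) : ℝ) * ε (k + 1)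
          ≤ (k + 1) * ((1 - 1 / ((k : ℝ) + 1)) * ε k + C / ((k : ℝ) + 1) ^ 2) := by
            push_cast; exact mul_le_mul_of_nonneg_left (hrec k) hk.le
        _ = k * ε k + C / (k + 1) := by field_simp; ring
    rw [sum_range_succ, mul_add, ← mul_div_assoc, mul_one]
    linarith

theorem sum_range_div_le_two_mul_sum_range_succ_div {k : ℕ} (hk : 1 ≤ k) :
    (∑ i ∈ range k, (1 : ℝ) / (i + 1)) / k
      ≤ 2 * (∑ i ∈ range (k + 1), (1 : ℝ) / (i + 1)) / (k + 1) := by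
  have hk' : (1 : ℝ) ≤ k := by exact_mod_cast hk
  have hH : 0 ≤ ∑ i ∈ range k, (1 : ℝ) / (i + 1) := sum_nonneg fun i _ => by positivity
  have hmono : ∑ i ∈ range k, (1 : ℝ) / (i + 1) ≤ ∑ i ∈ range (k + 1), (1 : ℝ) / (i + 1) := by
    rw [sum_range_succ]; linarith [show (0 : ℝ) ≤ 1 / (k + 1) by positivity]
  rw [div_le_div_iff₀ (by positivity) (by positivity)]
  nlinarith

theorem stmt7_general (ε : ℕ → ℝ)
    (C : ℝ) (hC : 0 < C)
    (hrec : ∀ k : ℕ, ε (k + 1) ≤ (1 - 1 / ((k : ℝ) + 1)) * ε k + C / ((k : ℝ) + 1) ^ 2) :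
    ∀ k : ℕ, 1 ≤ k →
      ε k ≤ 4 * C * (∑ i ∈ Finset.range (k + 1), (1 : ℝ) / (i + 1)) / (k + 1) := by
  intro k hk
  have hk' : (0 : ℝ) < k := by exact_mod_cast hk
  have hH : 0 ≤ ∑ i ∈ range (k + 1), (1 : ℝ) / (i + 1) := sum_nonneg fun i _ => by positivity
  calc ε k ≤ C * ((∑ i ∈ range k, (1 : ℝ) / (i + 1)) / k) := by
        rw [mul_div_assoc', le_div_iff₀ hk', mul_comm]
        exact natCast_mul_le_mul_sum_of_le_rec ε C hrec k
    _ ≤ C * (2 * (∑ i ∈ range (k + 1), (1 : ℝ) / (i + 1)) / (k + 1)) :=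
        mul_le_mul_of_nonneg_left (sum_range_div_le_two_mul_sum_range_succ_div hk) hC.le
    _ ≤ 4 * C * (∑ i ∈ range (k + 1), (1 : ℝ) / (i + 1)) / (k + 1) := by
        rw [mul_div_assoc', div_le_div_iff_of_pos_right (by positivity)]
        nlinarith

/-- The Frank-Wolfe error recurrence `ε_{k+1} ≤ (1 - 1/(k+1)) ε_k + C/(k+1)²`
implies `ε_k ≤ 4 C H_{k+1}/(k+1)` for `k ≥ 1`. -/
theorem stmt7 (ε : ℕ → ℝ) (hnn : ∀ k, 0 ≤ ε k)
    (C : ℝ) (hC : 0 < C)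
    (hrec : ∀ k : ℕ, ε (k + 1) ≤ (1 - 1 / ((k : ℝ) + 1)) * ε k + C / ((k : ℝ) + 1) ^ 2) :
    ∀ k : ℕ, 1 ≤ k →
      ε k ≤ 4 * C * (∑ i ∈ Finset.range (k + 1), (1 : ℝ) / (i + 1)) / (k + 1) :=
  stmt7_general ε C hC hrec
end

section
/- Let f : 2^V → ℝ≥0 be a normalized monotone supermodular function and let w ∈ ℝ^V. Sort V = {s₁, ..., sₙ} in ascending order of w, let A_i = {s_i, ..., s_n} with A_{n+1} = ∅, and define s*_i = f(A_i) - f(A_{i+1}). Then s* lies in the contrapolymatroid base polytope B_f = {x ∈ ℝ^V : x ≥ 0, x(S) ≥ f(S) for all S, x(V) = f(V)} and minimizes ⟨s, w⟩ over B_f. -/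
/-!
Telescoping `f S` along the chain `S ∩ A_1 ⊇ S ∩ A_2 ⊇ ⋯ ⊇ S ∩ A_{n+1} = ∅`,
supermodularity bounds each marginal `f(S ∩ A_i) - f(S ∩ A_{i+1})` by
`f(A_i) - f(A_{i+1}) = s*_i` when `s_i ∈ S` (it is `0` otherwise); this gives
`f(S) ≤ s*(S)`, with equality for `S = V`.
For optimality, Abel summation writes `⟨x - s*, w⟩` as
`∑_{i ≥ 2} (w(s_i) - w(s_{i-1})) (x(A_i) - f(A_i))`, a sum of products of nonnegative factors;
the boundary terms vanish because `x(V) = f(V)` and `A_{n+1} = ∅`.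
-/

open Finset

section Abel

variable {R : Type*} [CommRing R] [LinearOrder R] [IsStrictOrderedRing R]

/-- Abel summation, with the boundary term kept so that the statement is inductive. -/
theorem sum_mul_sub_succ_add_mul_last_nonneg {D : ℕ → R} (hD : ∀ i, 0 ≤ D i)
    (hD0 : D 0 = 0) :
    ∀ {n : ℕ} {W : Fin (n + 1) → R}, Monotone W →
      0 ≤ ∑ j, W j * (D j - D (j + 1)) + W (Fin.last n) * D (n + 1)
  | 0, W, _ => by simp [hD0]
  | n + 1, W, hW => by
    have ih := sum_mul_sub_succ_add_mul_last_nonneg hD hD0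
      (hW.comp Fin.strictMono_castSucc.monotone)
    have hstep := mul_nonneg (sub_nonneg.2 (hW (Fin.le_last (Fin.last n).castSucc))) (hD (n + 1))
    rw [Fin.sum_univ_castSucc]
    simp only [Function.comp_apply, Fin.val_castSucc, Fin.val_last] at ih hstep ⊢
    linear_combination ih + hstep

theorem sum_mul_sub_succ_nonneg {n : ℕ} {W : Fin n → R} (hW : Monotone W) {D : ℕ → R}
    (hD : ∀ i, 0 ≤ D i) (hD0 : D 0 = 0) (hDn : D n = 0) :
    0 ≤ ∑ j, W j * (D j - D (j + 1)) := by
  cases n with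
  | zero => simp
  | succ n => simpa [hDn] using sum_mul_sub_succ_add_mul_last_nonneg hD hD0 hW

end Abel

section Supermodular

variable {V G : Type*} [DecidableEq V] [AddCommGroup G] [PartialOrder G] [IsOrderedAddMonoid G]

theorem sub_le_sub_of_supermodular {f : Finset V → G}
    (hsup : ∀ A B, f A + f B ≤ f (A ∪ B) + f (A ∩ B)) {B C : Finset V} {a : V}
    (hBC : B ⊆ C) (ha : a ∉ C) :
    f (insert a B) - f B ≤ f (insert a C) - f C := by
  have h := hsup (insert a B) C
  rw [insert_union, union_eq_right.2 hBC, insert_inter_of_notMem ha, inter_eq_left.2 hBC]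
    at h
  exact sub_le_sub_iff.2 h

end Supermodular

section Greedy

variable {V : Type*} [DecidableEq V] {n : ℕ}

def suffix (σ : Fin n ≃ V) (i : ℕ) : Finset V :=
  (univ.filter fun j : Fin n => i ≤ (j : ℕ)).image σ

variable (σ : Fin n ≃ V)

theorem mem_suffix {i : ℕ} {v : V} : v ∈ suffix σ i ↔ i ≤ σ.symm v := by
  simp only [suffix, mem_image, mem_filter, mem_univ, true_and]
  exact ⟨by rintro ⟨j, hj, rfl⟩; simpa using hj,
    fun h => ⟨σ.symm v, h, σ.apply_symm_apply v⟩⟩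

theorem suffix_zero [Fintype V] : suffix σ 0 = univ := by
  ext v
  simp [mem_suffix]

theorem suffix_eq_empty {i : ℕ} (hi : n ≤ i) : suffix σ i = ∅ := by
  ext v
  simp only [mem_suffix, notMem_empty, iff_false, not_le]
  exact (σ.symm v).isLt.trans_le hi

theorem apply_notMem_suffix_succ (j : Fin n) : σ j ∉ suffix σ (j + 1) := by
  simp [mem_suffix]

theorem suffix_eq_insert (j : Fin n) : suffix σ j = insert (σ j) (suffix σ (j + 1)) := by
  ext v
  rw [mem_insert, mem_suffix, mem_suffix, ← σ.symm_apply_eq, eq_comm, Fin.ext_iff]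
  omega

theorem sum_sub_suffix [Fintype V] {G : Type*} [AddCommGroup G] (g : Finset V → G) :
    ∑ j : Fin n, (g (suffix σ j) - g (suffix σ (j + 1))) = g univ - g ∅ := by
  rw [Fin.sum_univ_eq_sum_range (fun i => g (suffix σ i) - g (suffix σ (i + 1))),
    sum_range_sub', suffix_zero, suffix_eq_empty σ le_rfl]

variable {G : Type*} [AddCommGroup G]

def greedyVector (f : Finset V → G) (v : V) : G :=
  f (suffix σ (σ.symm v)) - f (suffix σ (σ.symm v + 1))

theorem greedyVector_apply_equiv (f : Finset V → G) (j : Fin n) :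
    greedyVector σ f (σ j) = f (suffix σ j) - f (suffix σ (j + 1)) := by
  simp [greedyVector]

theorem sum_greedyVector [Fintype V] (f : Finset V → G) :
    ∑ v, greedyVector σ f v = f univ - f ∅ := by
  rw [← σ.sum_comp]
  simp only [greedyVector_apply_equiv, sum_sub_suffix]

variable [PartialOrder G] [IsOrderedAddMonoid G]

theorem greedyVector_nonneg {f : Finset V → G} (hmono : ∀ A B, A ⊆ B → f A ≤ f B)
    (v : V) :
    0 ≤ greedyVector σ f v :=
  sub_nonneg.2 <| hmono _ _ fun u hu => by
    rw [mem_suffix] at hu ⊢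
    omega

variable [Fintype V]

theorem le_sum_greedyVector {f : Finset V → G} (hnorm : f ∅ = 0)
    (hsup : ∀ A B, f A + f B ≤ f (A ∪ B) + f (A ∩ B)) (S : Finset V) :
    f S ≤ ∑ v ∈ S, greedyVector σ f v := by
  have hmarginal (j : Fin n) : f (S ∩ suffix σ j) - f (S ∩ suffix σ (j + 1)) ≤
      if σ j ∈ S then greedyVector σ f (σ j) else 0 := by
    rw [suffix_eq_insert σ j]
    split_ifs with hj
    · rw [inter_insert_of_mem hj, greedyVector_apply_equiv, suffix_eq_insert σ j]
      exact sub_le_sub_of_supermodular hsup inter_subset_right (apply_notMem_suffix_succ σ j)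
    · rw [inter_insert_of_notMem hj, sub_self]
  calc f S = ∑ j : Fin n, (f (S ∩ suffix σ j) - f (S ∩ suffix σ (j + 1))) := by
        rw [sum_sub_suffix σ (fun T => f (S ∩ T)), inter_univ, inter_empty, hnorm, sub_zero]
    _ ≤ ∑ j : Fin n, if σ j ∈ S then greedyVector σ f (σ j) else 0 :=
        sum_le_sum fun j _ => hmarginal j
    _ = ∑ v ∈ S, greedyVector σ f v := by
        rw [σ.sum_comp (fun v => if v ∈ S then greedyVector σ f v else 0), sum_ite_mem,
          univ_inter]

theorem sum_greedyVector_mul_le {R : Type*} [CommRing R] [LinearOrder R]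
    [IsStrictOrderedRing R]
    {f : Finset V → R} (hnorm : f ∅ = 0) {w x : V → R} (hw : Monotone (w ∘ σ))
    (hx : ∀ S, f S ≤ ∑ v ∈ S, x v) (hxV : ∑ v, x v = f univ) :
    ∑ v, greedyVector σ f v * w v ≤ ∑ v, x v * w v := by
  set D : ℕ → R := fun i => ∑ v ∈ suffix σ i, x v - f (suffix σ i)
  have hD_sub (j : Fin n) : D j - D (j + 1) = x (σ j) - greedyVector σ f (σ j) := by
    simp only [D, greedyVector_apply_equiv]
    rw [suffix_eq_insert σ j, sum_insert (apply_notMem_suffix_succ σ j), ← suffix_eq_insert]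
    abel
  have hD0 : D 0 = 0 := by simp [D, suffix_zero, hxV]
  have hDn : D n = 0 := by simp [D, suffix_eq_empty σ le_rfl, hnorm]
  have habel := sum_mul_sub_succ_nonneg hw (fun i => sub_nonneg.2 (hx _)) hD0 hDn
  have hdiff : ∑ v, x v * w v - ∑ v, greedyVector σ f v * w v =
      ∑ j, w (σ j) * (D j - D (j + 1)) := by
    rw [← sum_sub_distrib, ← σ.sum_comp]
    exact sum_congr rfl fun j _ => by rw [hD_sub]; ring
  exact sub_nonneg.1 (hdiff ▸ habel)

end Greedy

theorem stmt11_general {V : Type*} [Fintype V] [DecidableEq V] {n : ℕ}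
    (f : Finset V → ℝ) (hnorm : f ∅ = 0)
    (hmono : ∀ A B : Finset V, A ⊆ B → f A ≤ f B)
    (hsup : ∀ A B : Finset V, f A + f B ≤ f (A ∪ B) + f (A ∩ B))
    (w : V → ℝ) (σ : Fin n ≃ V)
    -- `σ` enumerates `V` in ascending order of `w`
    (hsort : ∀ i j : Fin n, i ≤ j → w (σ i) ≤ w (σ j)) :
    -- `A i = {s_i, ..., s_n}` is the suffix starting at position `i`
    let A : ℕ → Finset V := fun i => (Finset.univ.filter fun j : Fin n => i ≤ (j : ℕ)).image σ
    let sstar : V → ℝ := fun v => f (A (σ.symm v)) - f (A ((σ.symm v : ℕ) + 1))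
    ((∀ v : V, 0 ≤ sstar v) ∧ (∀ S : Finset V, f S ≤ ∑ v ∈ S, sstar v) ∧
        (∑ v, sstar v = f univ)) ∧
      ∀ x : V → ℝ, (∀ v : V, 0 ≤ x v) → (∀ S : Finset V, f S ≤ ∑ v ∈ S, x v) →
        (∑ v, x v = f univ) →
        ∑ v, sstar v * w v ≤ ∑ v, x v * w v :=
  ⟨⟨greedyVector_nonneg σ hmono, le_sum_greedyVector σ hnorm hsup,
      (sum_greedyVector σ f).trans (by rw [hnorm, sub_zero])⟩,
    fun _ _ hx hxV => sum_greedyVector_mul_le σ hnorm hsort hx hxV⟩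

/-- Edmonds' greedy theorem for contrapolymatroids: sorting the ground set in
ascending order of `w` and taking suffix marginals yields a base minimizing
`⟨s, w⟩` over the contrapolymatroid base polytope. -/
theorem stmt11 {V : Type*} [Fintype V] [DecidableEq V] {n : ℕ}
    (hn : Fintype.card V = n)
    (f : Finset V → ℝ) (hnorm : f ∅ = 0)
    (hmono : ∀ A B : Finset V, A ⊆ B → f A ≤ f B)
    (hsup : ∀ A B : Finset V, f A + f B ≤ f (A ∪ B) + f (A ∩ B))
    (w : V → ℝ) (σ : Fin n ≃ V)
    -- `σ` enumerates `V` in ascending order of `w`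
    (hsort : ∀ i j : Fin n, i ≤ j → w (σ i) ≤ w (σ j)) :
    -- `A i = {s_i, ..., s_n}` is the suffix starting at position `i`
    let A : ℕ → Finset V := fun i => (Finset.univ.filter fun j : Fin n => i ≤ (j : ℕ)).image σ
    let sstar : V → ℝ := fun v => f (A (σ.symm v)) - f (A ((σ.symm v : ℕ) + 1))
    ((∀ v : V, 0 ≤ sstar v) ∧ (∀ S : Finset V, f S ≤ ∑ v ∈ S, sstar v) ∧
        (∑ v, sstar v = f univ)) ∧
      ∀ x : V → ℝ, (∀ v : V, 0 ≤ x v) → (∀ S : Finset V, f S ≤ ∑ v ∈ S, x v) →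
        (∑ v, x v = f univ) →
        ∑ v, sstar v * w v ≤ ∑ v, x v * w v :=
  stmt11_general f hnorm hmono hsup w σ hsort
end

section
/- Let G = (V, E) be a finite multigraph and let f(S) = |E(S)| for S ⊆ V, where E(S) is the set of edges with both endpoints in S. Then a vector b ∈ ℝ^V lies in the contrapolymatroid base polytope B_f (i.e., b ≥ 0, b(S) ≥ f(S) for all S ⊆ V, b(V) = |E|) if and only if b is a fractional orientation of G: there exist x_{uv}, x_{vu} ≥ 0 with x_{uv} + x_{vu} = 1 for every edge {u,v} ∈ E such that b_u = Σ_{v : uv ∈ E} x_{uv} for all u. -/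
/-!
Peel off one edge `uv` at a time. If `b` lies in the base polytope for the edge set `T ∪ {uv}`,
let `g(S) = b(S) - |E_T(S)|` be the slack with respect to `T`. Then `g ≥ 0`, `g(S) ≥ 1` when
`u, v ∈ S`, and by supermodularity of `S ↦ |E_T(S)|` any `S₁ ∋ u` and `S₂ ∋ v` satisfy
`g(S₁) + g(S₂) ≥ g(S₁ ∪ S₂) + g(S₁ ∩ S₂) ≥ 1`. Hence some `t ∈ [0, 1]` is at most the slack
of every set separating `u` from `v`, and `1 - t` at most that of every set separating `v`
from `u`; giving `t` to `u` and `1 - t` to `v` leaves a point of the base polytope for `T`.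
-/

open Finset

lemma exists_mem_Icc_le_and_one_sub_le {ι : Type*} [Finite ι] (g : ι → ℝ) (P Q : ι → Prop)
    (hg : ∀ i, 0 ≤ g i) (hPQ : ∀ i j, P i → Q j → 1 ≤ g i + g j) :
    ∃ t ∈ Set.Icc (0 : ℝ) 1, (∀ i, P i → t ≤ g i) ∧ ∀ j, Q j → 1 - t ≤ g j := by
  by_cases hP : ∃ i, P i
  · obtain ⟨i₀, hi₀, hmin⟩ := Set.exists_min_image {i | P i} g (Set.toFinite _) hP
    refine ⟨min (g i₀) 1, ⟨le_min (hg i₀) zero_le_one, min_le_right _ _⟩,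
      fun i hi => (min_le_left _ _).trans (hmin i hi), fun j hj => ?_⟩
    have := hPQ i₀ j hi₀ hj
    have := min_le_left (g i₀) 1
    have := hg j
    rcases min_cases (g i₀) 1 with ⟨h, -⟩ | ⟨h, -⟩ <;> rw [h] <;> linarith
  · push Not at hP
    exact ⟨1, ⟨zero_le_one, le_rfl⟩, fun i hi => (hP i hi).elim,
      fun j _ => by simpa using hg j⟩

section Orientation

variable {V E : Type*} [DecidableEq V] (fst snd : E → V)

def edgesIn (T : Finset E) (S : Finset V) : Finset E :=
  T.filter fun e => fst e ∈ S ∧ snd e ∈ S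

/-- For `e = uv`, `s` plays the role of `x_{uv}` and `1 - s` that of `x_{vu}`. -/
def edgeLoad (e : E) (s : ℝ) (u : V) : ℝ :=
  (if fst e = u then s else 0) + (if snd e = u then 1 - s else 0)

/-- The base polytope of the contrapolymatroid `S ↦ |E_T(S)|`; nonnegativity follows from the
singleton constraints. -/
def InBasePolytope [Fintype V] (T : Finset E) (b : V → ℝ) : Prop :=
  (∀ S : Finset V, (#(edgesIn fst snd T S) : ℝ) ≤ ∑ v ∈ S, b v) ∧ ∑ v, b v = #T

variable {fst snd}

lemma card_edgesIn_add_card_edgesIn_le (T : Finset E) (S₁ S₂ : Finset V) :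
    #(edgesIn fst snd T S₁) + #(edgesIn fst snd T S₂)
      ≤ #(edgesIn fst snd T (S₁ ∩ S₂)) + #(edgesIn fst snd T (S₁ ∪ S₂)) := by
  simp only [edgesIn, card_filter, ← sum_add_distrib]
  refine sum_le_sum fun e _ => ?_
  by_cases h1 : fst e ∈ S₁ <;> by_cases h2 : snd e ∈ S₁ <;>
    by_cases h3 : fst e ∈ S₂ <;> by_cases h4 : snd e ∈ S₂ <;>
    simp [h1, h2, h3, h4]

lemma sum_sub_card_edgesIn_union_add_inter_le (T : Finset E) (b : V → ℝ)
    (S₁ S₂ : Finset V) :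
    (∑ w ∈ S₁ ∪ S₂, b w - #(edgesIn fst snd T (S₁ ∪ S₂)))
        + (∑ w ∈ S₁ ∩ S₂, b w - #(edgesIn fst snd T (S₁ ∩ S₂)))
      ≤ (∑ w ∈ S₁, b w - #(edgesIn fst snd T S₁))
        + (∑ w ∈ S₂, b w - #(edgesIn fst snd T S₂)) := by
  have hsuper : (#(edgesIn fst snd T S₁) + #(edgesIn fst snd T S₂) : ℝ)
      ≤ #(edgesIn fst snd T (S₁ ∩ S₂)) + #(edgesIn fst snd T (S₁ ∪ S₂)) := by
    exact_mod_cast card_edgesIn_add_card_edgesIn_le T S₁ S₂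
  linarith [sum_union_inter (s₁ := S₁) (s₂ := S₂) (f := b)]

lemma card_edgesIn_insert [DecidableEq E] {T : Finset E} {a : E} (ha : a ∉ T) (S : Finset V) :
    (#(edgesIn fst snd (insert a T) S) : ℝ)
      = #(edgesIn fst snd T S) + if fst a ∈ S ∧ snd a ∈ S then 1 else 0 := by
  rw [edgesIn, filter_insert]
  split_ifs
  · rw [card_insert_of_notMem fun h => ha (mem_filter.mp h).1]
    push_cast
    rfl
  · simp [edgesIn]

lemma edgeLoad_nonneg (e : E) {s : ℝ} (hs : s ∈ Set.Icc (0 : ℝ) 1) (u : V) :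
    0 ≤ edgeLoad fst snd e s u := by
  obtain ⟨h0, h1⟩ := hs
  unfold edgeLoad
  split_ifs <;> linarith

lemma sum_edgeLoad (e : E) (s : ℝ) (S : Finset V) :
    ∑ u ∈ S, edgeLoad fst snd e s u
      = (if fst e ∈ S then s else 0) + (if snd e ∈ S then 1 - s else 0) := by
  simp only [edgeLoad, sum_add_distrib, sum_ite_eq]

lemma indicator_le_sum_edgeLoad (e : E) {s : ℝ} (hs : s ∈ Set.Icc (0 : ℝ) 1) (S : Finset V) :
    (if fst e ∈ S ∧ snd e ∈ S then 1 else 0) ≤ ∑ u ∈ S, edgeLoad fst snd e s u := by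
  obtain ⟨h0, h1⟩ := hs
  rw [sum_edgeLoad]
  split_ifs <;> simp_all

variable [Fintype V]

lemma sum_univ_edgeLoad (e : E) (s : ℝ) : ∑ u, edgeLoad fst snd e s u = 1 := by
  simp [sum_edgeLoad]

lemma inBasePolytope_of_orientation (T : Finset E) {x : E → ℝ}
    (hx : ∀ e, x e ∈ Set.Icc (0 : ℝ) 1) :
    InBasePolytope fst snd T fun u => ∑ e ∈ T, edgeLoad fst snd e (x e) u := by
  refine ⟨fun S => ?_, ?_⟩
  · rw [sum_comm, edgesIn, card_filter]
    push_cast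
    exact sum_le_sum fun e _ => indicator_le_sum_edgeLoad e (hx e) S
  · simp [sum_comm (s := univ), sum_univ_edgeLoad]

lemma InBasePolytope.exists_sub_edgeLoad [DecidableEq E] {T : Finset E} {a : E} (ha : a ∉ T)
    {b : V → ℝ} (hb : InBasePolytope fst snd (insert a T) b) :
    ∃ t ∈ Set.Icc (0 : ℝ) 1, InBasePolytope fst snd T fun w => b w - edgeLoad fst snd a t w := by
  set g : Finset V → ℝ := fun S => ∑ w ∈ S, b w - #(edgesIn fst snd T S)
  have hg : ∀ S, 0 ≤ g S ∧ (fst a ∈ S → snd a ∈ S → 1 ≤ g S) := fun S => by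
    have hbS := hb.1 S
    rw [card_edgesIn_insert ha] at hbS
    refine ⟨?_, fun hu hv => ?_⟩
    · split_ifs at hbS <;> simp only [g] <;> linarith
    · simp only [g, hu, hv, and_self, if_true] at hbS ⊢
      linarith
  have hcross (S₁ S₂ : Finset V) (h₁ : fst a ∈ S₁ ∧ snd a ∉ S₁)
      (h₂ : snd a ∈ S₂ ∧ fst a ∉ S₂) : 1 ≤ g S₁ + g S₂ :=
    calc 1 ≤ g (S₁ ∪ S₂) + g (S₁ ∩ S₂) := by
          linarith [(hg (S₁ ∪ S₂)).2 (mem_union_left _ h₁.1) (mem_union_right _ h₂.1),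
            (hg (S₁ ∩ S₂)).1]
      _ ≤ g S₁ + g S₂ := sum_sub_card_edgesIn_union_add_inter_le T b S₁ S₂
  obtain ⟨t, ht, htu, htv⟩ := exists_mem_Icc_le_and_one_sub_le g _ _ (fun S => (hg S).1) hcross
  refine ⟨t, ht, fun S => ?_, ?_⟩
  · rw [sum_sub_distrib, sum_edgeLoad]
    have hbS := hb.1 S
    rw [card_edgesIn_insert ha] at hbS
    by_cases hu : fst a ∈ S <;> by_cases hv : snd a ∈ S <;>
      simp only [hu, hv, and_self, and_true, and_false, if_true, if_false] at hbS ⊢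
    · linarith
    · linarith [htu S ⟨hu, hv⟩]
    · linarith [htv S ⟨hv, hu⟩]
    · linarith
  · rw [sum_sub_distrib, sum_univ_edgeLoad, hb.2, card_insert_of_notMem ha]
    push_cast
    ring

theorem InBasePolytope.exists_orientation {T : Finset E} {b : V → ℝ}
    (hb : InBasePolytope fst snd T b) :
    ∃ x : E → ℝ, (∀ e, x e ∈ Set.Icc (0 : ℝ) 1) ∧
      ∀ u, b u = ∑ e ∈ T, edgeLoad fst snd e (x e) u := by
  classical
  induction T using Finset.induction_on generalizing b with
  | empty =>
    have hnonneg : ∀ v, 0 ≤ b v := fun v => by simpa [edgesIn] using hb.1 {v}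
    have hzero := (sum_eq_zero_iff_of_nonneg fun v _ => hnonneg v).mp (by simpa using hb.2)
    exact ⟨0, fun _ => ⟨le_rfl, zero_le_one⟩, fun u => by simp [hzero u (mem_univ u)]⟩
  | insert a T ha ih =>
    obtain ⟨t, ht, hb'⟩ := hb.exists_sub_edgeLoad ha
    obtain ⟨x, hx, hbx⟩ := ih hb'
    refine ⟨Function.update x a t, fun e => ?_, fun u => ?_⟩
    · rcases eq_or_ne e a with rfl | hea
      · simpa using ht
      · simpa [hea] using hx e
    · rw [sum_insert ha, Function.update_self,
        sum_congr rfl fun e he => by rw [Function.update_of_ne (ne_of_mem_of_not_mem he ha)],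
        ← hbx u]
      ring

end Orientation

theorem stmt12_general {V E : Type*} [Fintype V] [Fintype E] [DecidableEq V]
    (fst snd : E → V) :
    let f : Finset V → ℝ :=
      fun S => ((Finset.univ.filter fun e : E => fst e ∈ S ∧ snd e ∈ S).card : ℝ)
    ∀ b : V → ℝ,
      ((∀ v : V, 0 ≤ b v) ∧ (∀ S : Finset V, f S ≤ ∑ v ∈ S, b v) ∧
          (∑ v, b v = (Fintype.card E : ℝ))) ↔
        ∃ x : E → ℝ, (∀ e : E, 0 ≤ x e ∧ x e ≤ 1) ∧
          ∀ u : V, b u = ∑ e : E, ((if fst e = u then x e else 0) +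
            (if snd e = u then 1 - x e else 0)) := by
  intro f b
  constructor
  · rintro ⟨-, hf, hcard⟩
    exact InBasePolytope.exists_orientation (T := univ) ⟨hf, by rwa [card_univ]⟩
  · rintro ⟨x, hx, hbx⟩
    obtain rfl : b = fun u => ∑ e, edgeLoad fst snd e (x e) u := funext hbx
    obtain ⟨hf, hcard⟩ := inBasePolytope_of_orientation (V := V) univ hx
    exact ⟨fun u => sum_nonneg fun e _ => edgeLoad_nonneg e (hx e) u, hf,
      by rwa [card_univ] at hcard⟩

/-- For `f(S) = |E(S)|` on a multigraph (edges given by endpoint maps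
`fst, snd : E → V`), a vector `b` is in the contrapolymatroid base polytope of
`f` iff `b` is induced by a fractional orientation of the edges. -/
theorem stmt12 {V E : Type*} [Fintype V] [Fintype E] [DecidableEq V]
    (fst snd : E → V) (hloop : ∀ e : E, fst e ≠ snd e) :
    let f : Finset V → ℝ :=
      fun S => ((Finset.univ.filter fun e : E => fst e ∈ S ∧ snd e ∈ S).card : ℝ)
    ∀ b : V → ℝ,
      ((∀ v : V, 0 ≤ b v) ∧ (∀ S : Finset V, f S ≤ ∑ v ∈ S, b v) ∧
          (∑ v, b v = (Fintype.card E : ℝ))) ↔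
        ∃ x : E → ℝ, (∀ e : E, 0 ≤ x e ∧ x e ≤ 1) ∧
          ∀ u : V, b u = ∑ e : E, ((if fst e = u then x e else 0) +
            (if snd e = u then 1 - x e else 0)) :=
  stmt12_general fst snd
end

section
/- Let G = (V, E) be a finite graph and let w : V → ℝ be vertex weights. Let d̂ be the degree vector output by the weighted-greedy peeling algorithm: repeatedly remove u minimizing w(u) + deg_{G'}(u) from the remaining graph G', recording d̂(u) = deg_{G'}(u) at removal. Then ⟨w, d̂⟩ ≤ min over fractional orientations d of ⟨w, d⟩ + Σ_{u ∈ V} deg_G(u)², where the additive error does not depend on w. -/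
/-!
Record the peeling order as the integral orientation `y` that points each edge away from its
earlier-peeled endpoint, so that `d̂` is the load vector of `y`. For any fractional orientation
`x`, the weighted load difference `⟨w, d̂ - d⟩` splits over the edges into the terms
`(w v - w u) (y v u - x v u)`. If `v` is peeled before `u`, the greedy choice at the moment
`v` is removed gives `w v - w u ≤ deg u`, so every edge term is at most `deg u + deg v`, and
summing these over the edges gives `Σ_u deg(u)²`.
-/

open Finset

namespace SimpleGraph

variable {V : Type*}

/-- `x v u` is the fraction of the edge `{u, v}` assigned to `v`; the load of `v` is
`∑ u ∈ G.neighborFinset v, x v u`. -/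
def IsFractionalOrientation (G : SimpleGraph V) (x : V → V → ℝ) : Prop :=
  ∀ u v, G.Adj u v → 0 ≤ x u v ∧ x u v + x v u = 1

def rankOrientation (r : V → ℕ) (v u : V) : ℝ :=
  if r v ≤ r u then 1 else 0

theorem isFractionalOrientation_rankOrientation {G : SimpleGraph V} {r : V → ℕ}
    (hr : Function.Injective r) :
    G.IsFractionalOrientation (rankOrientation r) := by
  intro u v huv
  have hne : r u ≠ r v := hr.ne huv.ne
  unfold rankOrientation
  constructor
  · split_ifs <;> norm_num
  · split_ifs <;> norm_num <;> omega

variable [Fintype V] (G : SimpleGraph V) [DecidableRel G.Adj]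

theorem sum_sum_neighborFinset_comm {M : Type*} [AddCommMonoid M] (f : V → V → M) :
    ∑ v, ∑ u ∈ G.neighborFinset v, f v u = ∑ v, ∑ u ∈ G.neighborFinset v, f u v :=
  Finset.sum_comm' fun v u => by simp [G.adj_comm]

theorem sum_sum_neighborFinset_degree_self :
    ∑ v, ∑ _u ∈ G.neighborFinset v, (G.degree v : ℝ) = ∑ v, (G.degree v : ℝ) ^ 2 := by
  simp [sq]

theorem sum_sum_neighborFinset_degree :
    ∑ v, ∑ u ∈ G.neighborFinset v, (G.degree u : ℝ) = ∑ v, (G.degree v : ℝ) ^ 2 := by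
  rw [sum_sum_neighborFinset_comm, sum_sum_neighborFinset_degree_self]

theorem two_mul_sum_mul_load_sub {x y : V → V → ℝ} (hx : G.IsFractionalOrientation x)
    (hy : G.IsFractionalOrientation y) (w : V → ℝ) :
    2 * ∑ v, w v * ∑ u ∈ G.neighborFinset v, (y v u - x v u) =
      ∑ v, ∑ u ∈ G.neighborFinset v, (w v - w u) * (y v u - x v u) := by
  have hanti : ∀ v, ∀ u ∈ G.neighborFinset v, y u v - x u v = -(y v u - x v u) := by
    intro v u hu
    have hvu := G.mem_neighborFinset v u |>.1 hu
    linarith [(hx v u hvu).2, (hy v u hvu).2]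
  have hswap : ∑ v, ∑ u ∈ G.neighborFinset v, w u * (y v u - x v u) =
      -∑ v, ∑ u ∈ G.neighborFinset v, w v * (y v u - x v u) := by
    rw [sum_sum_neighborFinset_comm, ← sum_neg_distrib]
    refine sum_congr rfl fun v _ => ?_
    rw [← sum_neg_distrib]
    exact sum_congr rfl fun u hu => by rw [hanti v u hu, mul_neg]
  calc 2 * ∑ v, w v * ∑ u ∈ G.neighborFinset v, (y v u - x v u)
      = ∑ v, ∑ u ∈ G.neighborFinset v, w v * (y v u - x v u) -
          ∑ v, ∑ u ∈ G.neighborFinset v, w u * (y v u - x v u) := by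
        rw [hswap, sub_neg_eq_add, ← two_mul]
        simp only [mul_sum]
    _ = ∑ v, ∑ u ∈ G.neighborFinset v, (w v - w u) * (y v u - x v u) := by
        simp only [← sum_sub_distrib, sub_mul]

theorem sub_le_degree_of_add_card_inter_le [DecidableEq V] {w : V → ℝ} {a b : V} (s : Finset V)
    (h : w a + #(G.neighborFinset a ∩ s) ≤ w b + #(G.neighborFinset b ∩ s)) :
    w a - w b ≤ G.degree b := by
  have hb : #(G.neighborFinset b ∩ s) ≤ G.degree b :=
    G.card_neighborFinset_eq_degree b ▸ card_le_card inter_subset_left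
  have ha : (0 : ℝ) ≤ #(G.neighborFinset a ∩ s) := Nat.cast_nonneg _
  linarith [(Nat.cast_le (α := ℝ)).2 hb]

variable {G}

theorem sum_rankOrientation_eq_card (r : V → ℕ) (v : V) :
    ∑ u ∈ G.neighborFinset v, rankOrientation r v u = #{u ∈ G.neighborFinset v | r v ≤ r u} := by
  simp [rankOrientation]

theorem mul_rankOrientation_sub_le {r : V → ℕ} {w : V → ℝ}
    (hw : ∀ a b, r a ≤ r b → w a - w b ≤ G.degree b) {x : V → V → ℝ}
    (hx : G.IsFractionalOrientation x) {u v : V} (hvu : G.Adj v u) :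
    (w v - w u) * (rankOrientation r v u - x v u) ≤ G.degree u + G.degree v := by
  obtain ⟨hxvu, hsum⟩ := hx v u hvu
  have hxuv := (hx u v hvu.symm).1
  have hdu : (0 : ℝ) ≤ G.degree u := Nat.cast_nonneg _
  have hdv : (0 : ℝ) ≤ G.degree v := Nat.cast_nonneg _
  unfold rankOrientation
  split_ifs with hle
  · have := hw v u hle
    nlinarith
  · have := hw u v (by omega)
    nlinarith

theorem sum_mul_load_rankOrientation_le {r : V → ℕ} (hr : Function.Injective r) {w : V → ℝ}
    (hw : ∀ a b, r a ≤ r b → w a - w b ≤ G.degree b) {x : V → V → ℝ}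
    (hx : G.IsFractionalOrientation x) :
    ∑ v, w v * ∑ u ∈ G.neighborFinset v, rankOrientation r v u ≤
      ∑ v, w v * ∑ u ∈ G.neighborFinset v, x v u + ∑ v, (G.degree v : ℝ) ^ 2 := by
  have hedges : ∑ v, ∑ u ∈ G.neighborFinset v, (w v - w u) * (rankOrientation r v u - x v u) ≤
      ∑ v, ∑ u ∈ G.neighborFinset v, ((G.degree u : ℝ) + G.degree v) :=
    sum_le_sum fun v _ => sum_le_sum fun u hu =>
      mul_rankOrientation_sub_le hw hx ((G.mem_neighborFinset v u).1 hu)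
  rw [← G.two_mul_sum_mul_load_sub hx (isFractionalOrientation_rankOrientation hr)] at hedges
  simp only [sum_add_distrib, sum_sum_neighborFinset_degree, sum_sum_neighborFinset_degree_self,
    sum_sub_distrib, mul_sub] at hedges
  linarith

end SimpleGraph

theorem stmt13_general {V : Type*} [Fintype V] [DecidableEq V] {n : ℕ}
    (G : SimpleGraph V) [DecidableRel G.Adj]
    (w : V → ℝ) (σ : Fin n ≃ V) :
    -- `R i` is the set of vertices remaining just before step `i`; `σ i` is peeled at step `i`
    let R : ℕ → Finset V := fun i => (Finset.univ.filter fun j : Fin n => i ≤ (j : ℕ)).image σ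
    let degR : ℕ → V → ℕ := fun i v => (G.neighborFinset v ∩ R i).card
    let dhat : V → ℝ := fun v => (degR (σ.symm v) v : ℝ)
    -- greedy choice: the peeled vertex minimizes `w(u) + deg_{G'}(u)` among remaining vertices
    (∀ i : Fin n, ∀ u ∈ R i,
        w (σ i) + (degR i (σ i) : ℝ) ≤ w u + (degR i u : ℝ)) →
    -- any fractional orientation `x` with induced load vector `d`
    ∀ x : V → V → ℝ,
      (∀ u v : V, G.Adj u v → 0 ≤ x u v ∧ x u v + x v u = 1) →
      ∑ v, w v * dhat v ≤
        ∑ v, w v * (∑ u ∈ G.neighborFinset v, x v u) +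
          ∑ v, ((G.degree v : ℝ)) ^ 2 := by
  intro R degR dhat hgreedy x hx
  set r : V → ℕ := fun v => σ.symm v
  have hr : Function.Injective r := Fin.val_injective.comp σ.symm.injective
  have hR : ∀ i u, u ∈ R i ↔ i ≤ r u := fun i u => by
    simp only [R, r, mem_image, mem_filter, mem_univ, true_and]
    exact ⟨by rintro ⟨j, hj, rfl⟩; simpa using hj, fun h => ⟨σ.symm u, h, σ.apply_symm_apply u⟩⟩
  have hdhat : ∀ v, dhat v = ∑ u ∈ G.neighborFinset v, SimpleGraph.rankOrientation r v u := fun v => by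
    rw [SimpleGraph.sum_rankOrientation_eq_card]
    simp only [dhat, degR]
    congr 2
    ext u
    simp only [mem_inter, mem_filter, hR, r]
  have hw : ∀ a b, r a ≤ r b → w a - w b ≤ G.degree b := fun a b hab =>
    G.sub_le_degree_of_add_card_inter_le (R (r a))
      (by simpa [r] using hgreedy (σ.symm a) b ((hR _ _).2 hab))
  simpa only [hdhat] using SimpleGraph.sum_mul_load_rankOrientation_le hr hw hx

/-- The weighted-greedy peeling order produces a degree vector `d̂` whose
weighted cost is within an additive error `Σ_u deg(u)²` (independent of `w`)
of the minimum weighted cost over all fractional orientations. -/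
theorem stmt13 {V : Type*} [Fintype V] [DecidableEq V] {n : ℕ}
    (hn : Fintype.card V = n)
    (G : SimpleGraph V) [DecidableRel G.Adj]
    (w : V → ℝ) (σ : Fin n ≃ V) :
    -- `R i` is the set of vertices remaining just before step `i`; `σ i` is peeled at step `i`
    let R : ℕ → Finset V := fun i => (Finset.univ.filter fun j : Fin n => i ≤ (j : ℕ)).image σ
    let degR : ℕ → V → ℕ := fun i v => (G.neighborFinset v ∩ R i).card
    let dhat : V → ℝ := fun v => (degR (σ.symm v) v : ℝ)
    -- greedy choice: the peeled vertex minimizes `w(u) + deg_{G'}(u)` among remaining vertices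
    (∀ i : Fin n, ∀ u ∈ R i,
        w (σ i) + (degR i (σ i) : ℝ) ≤ w u + (degR i u : ℝ)) →
    -- any fractional orientation `x` with induced load vector `d`
    ∀ x : V → V → ℝ,
      (∀ u v : V, G.Adj u v → 0 ≤ x u v ∧ x u v + x v u = 1) →
      ∑ v, w v * dhat v ≤
        ∑ v, w v * (∑ u ∈ G.neighborFinset v, x v u) +
          ∑ v, ((G.degree v : ℝ)) ^ 2 :=
  stmt13_general G w σ
end

section
/- Consider the set D of fractional-orientation load vectors of a graph G = (V, E) with m edges, and let f(b) = Σ_u b_u². The curvature constant C_f = sup_{x,s ∈ D} 2(s - x)ᵀ(s - x) satisfies 2m ≤ C_f ≤ 2 Σ_{u ∈ V} deg_G(u)². -/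
/-!
Upper bound: every load satisfies `0 ≤ b u ≤ deg u`, so `(s u - b u)² ≤ deg u²`.

Lower bound: an antisymmetric edge flow `θ` with `|θ| ≤ 1` yields the two fractional orientations
`(1 ± θ) / 2`, whose loads differ by the net outflow `∑_v θ u v`. Taking `θ = ±1` amounts to
choosing signs `σ_e` of the oriented incidence vectors `a_e = 𝟙_p - 𝟙_q`, and then
`s - b = ∑_e σ_e a_e`. Choosing the signs greedily, each new term making a nonnegative inner
product with the partial sum (a derandomisation of the random-orientation argument), gives
`‖∑_e σ_e a_e‖² ≥ ∑_e ‖a_e‖² = 2m`.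
-/

open Finset

/-- `b` is a fractional-orientation load vector of `G`. -/
def IsLoad {V : Type*} [Fintype V] [DecidableEq V] (G : SimpleGraph V)
    [DecidableRel G.Adj] (b : V → ℝ) : Prop :=
  ∃ x : V → V → ℝ, (∀ u v : V, G.Adj u v → 0 ≤ x u v ∧ x u v + x v u = 1) ∧
    ∀ u : V, b u = ∑ v ∈ G.neighborFinset u, x u v

theorem exists_sign_sum_smul_norm_sq_ge {E ι : Type*} [NormedAddCommGroup E]
    [InnerProductSpace ℝ E] (s : Finset ι) (a : ι → E) :
    ∃ σ : ι → ℝ, (∀ i, |σ i| = 1) ∧ ∑ i ∈ s, ‖a i‖ ^ 2 ≤ ‖∑ i ∈ s, σ i • a i‖ ^ 2 := by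
  classical
  induction s using Finset.induction_on with
  | empty => exact ⟨fun _ => 1, by simp, by simp⟩
  | @insert j s hj ih =>
    obtain ⟨σ, hσ, hle⟩ := ih
    set x := ∑ i ∈ s, σ i • a i
    obtain ⟨t, ht, hinner⟩ : ∃ t : ℝ, |t| = 1 ∧ 0 ≤ t * inner ℝ x (a j) := by
      rcases le_total 0 (inner ℝ x (a j)) with h | h
      · exact ⟨1, by simp, by simpa using h⟩
      · exact ⟨-1, by simp, by simpa using h⟩
    refine ⟨Function.update σ j t, fun i => ?_, ?_⟩
    · rcases eq_or_ne i j with rfl | hi <;> simp [*]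
    have hsum : ∑ i ∈ s, Function.update σ j t i • a i = x :=
      sum_congr rfl fun i hi => by rw [Function.update_of_ne (ne_of_mem_of_not_mem hi hj)]
    rw [sum_insert hj, sum_insert hj, Function.update_self, hsum, add_comm (t • a j),
      norm_add_sq_real, norm_smul, Real.norm_eq_abs, ht, one_mul, inner_smul_right]
    linarith

section Loads

variable {V : Type*} [Fintype V] [DecidableEq V] {G : SimpleGraph V} [DecidableRel G.Adj]
  {b : V → ℝ}

theorem IsLoad.nonneg (hb : IsLoad G b) (u : V) : 0 ≤ b u := by
  obtain ⟨x, hx, hb⟩ := hb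
  rw [hb]
  exact sum_nonneg fun v hv => (hx u v ((G.mem_neighborFinset u v).mp hv)).1

theorem IsLoad.le_degree (hb : IsLoad G b) (u : V) : b u ≤ G.degree u := by
  obtain ⟨x, hx, hb⟩ := hb
  rw [hb, ← G.card_neighborFinset_eq_degree, ← nsmul_one, ← sum_const]
  refine sum_le_sum fun v hv => ?_
  have huv := (G.mem_neighborFinset u v).mp hv
  linarith [hx u v huv, (hx v u huv.symm).1]

variable (G)

theorem exists_isLoad_sub_eq_sum (θ : V → V → ℝ)
    (hanti : ∀ u v, G.Adj u v → θ u v + θ v u = 0)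
    (hle : ∀ u v, G.Adj u v → |θ u v| ≤ 1) :
    ∃ b s : V → ℝ, IsLoad G b ∧ IsLoad G s ∧
      ∀ u, s u - b u = ∑ v ∈ G.neighborFinset u, θ u v := by
  refine ⟨fun u => ∑ v ∈ G.neighborFinset u, (1 - θ u v) / 2,
    fun u => ∑ v ∈ G.neighborFinset u, (1 + θ u v) / 2,
    ⟨fun u v => (1 - θ u v) / 2, fun u v h => ?_, fun u => rfl⟩,
    ⟨fun u v => (1 + θ u v) / 2, fun u v h => ?_, fun u => rfl⟩, fun u => ?_⟩
  · have := abs_le.mp (hle u v h)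
    have := hanti u v h
    constructor <;> linarith
  · have := abs_le.mp (hle u v h)
    have := hanti u v h
    constructor <;> linarith
  · rw [← sum_sub_distrib]
    exact sum_congr rfl fun v _ => by ring

end Loads

namespace SimpleGraph

variable {V : Type*} [DecidableEq V]

theorem sum_incidenceFinset_eq_sum_neighborFinset {M : Type*} [AddCommMonoid M]
    (G : SimpleGraph V) [Fintype V] [DecidableRel G.Adj] (h : Sym2 V → M) (u : V) :
    ∑ e ∈ G.incidenceFinset u, h e = ∑ v ∈ G.neighborFinset u, h s(u, v) := by
  rw [← sum_image fun v _ w _ hvw => Sym2.congr_right.mp hvw]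
  congr 1
  ext e
  induction e using Sym2.ind with
  | h p q =>
    simp only [mem_incidenceFinset, incidenceSet, Set.mem_ofPred_eq, mem_edgeSet, Sym2.mem_iff,
      mem_image, mem_neighborFinset, Sym2.eq_iff]
    constructor
    · rintro ⟨h, rfl | rfl⟩
      exacts [⟨q, h, by tauto⟩, ⟨p, h.symm, by tauto⟩]
    · rintro ⟨w, h, ⟨rfl, rfl⟩ | ⟨rfl, rfl⟩⟩
      exacts [⟨h, by tauto⟩, ⟨h.symm, by tauto⟩]

/-- `𝟙_p - 𝟙_q` for `(p, q) = e.out`; only its sign depends on the choice of representative. -/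
noncomputable def orientedIncidence (e : Sym2 V) : EuclideanSpace ℝ V :=
  EuclideanSpace.single e.out.1 1 - EuclideanSpace.single e.out.2 1

theorem orientedIncidence_apply (e : Sym2 V) (u : V) :
    orientedIncidence e u =
      (if u = e.out.1 then 1 else 0) - (if u = e.out.2 then 1 else 0) := by
  simp [orientedIncidence]

theorem orientedIncidence_apply_of_notMem {e : Sym2 V} {u : V} (hu : u ∉ e) :
    orientedIncidence e u = 0 := by
  have h1 : u ≠ e.out.1 := fun h => hu (h ▸ e.out_fst_mem)
  have h2 : u ≠ e.out.2 := fun h => hu (h ▸ e.out_snd_mem)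
  simp [orientedIncidence_apply, h1, h2]

theorem abs_orientedIncidence_apply_le (e : Sym2 V) (u : V) :
    |orientedIncidence e u| ≤ 1 := by
  rw [orientedIncidence_apply]
  split_ifs <;> norm_num

theorem orientedIncidence_apply_add_apply {u v : V} (huv : u ≠ v) :
    orientedIncidence s(u, v) u + orientedIncidence s(u, v) v = 0 := by
  have hout : s((s(u, v)).out.1, (s(u, v)).out.2) = s(u, v) := Quot.out_eq _
  simp only [orientedIncidence_apply]
  rcases Sym2.eq_iff.mp hout with ⟨h1, h2⟩ | ⟨h1, h2⟩ <;> simp [h1, h2, huv, huv.symm]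

theorem two_le_norm_sq_orientedIncidence [Fintype V] {e : Sym2 V} (he : ¬e.IsDiag) :
    2 ≤ ‖orientedIncidence e‖ ^ 2 := by
  have hpq : e.out.1 ≠ e.out.2 := fun h =>
    he (by rw [← Quot.out_eq e]; exact Sym2.mk_isDiag_iff.mpr h)
  calc (2 : ℝ) = ∑ u ∈ {e.out.1, e.out.2}, ‖orientedIncidence e u‖ ^ 2 := by
        norm_num [sum_pair hpq, orientedIncidence_apply, hpq, hpq.symm]
    _ ≤ ∑ u, ‖orientedIncidence e u‖ ^ 2 :=
        sum_le_sum_of_subset_of_nonneg (subset_univ _) fun _ _ _ => by positivity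
    _ = ‖orientedIncidence e‖ ^ 2 := (EuclideanSpace.norm_sq_eq _).symm

theorem sum_smul_orientedIncidence_apply [Fintype V] (G : SimpleGraph V) [DecidableRel G.Adj]
    (σ : Sym2 V → ℝ) (u : V) :
    (∑ e ∈ G.edgeFinset, σ e • orientedIncidence e) u =
      ∑ v ∈ G.neighborFinset u, σ s(u, v) * orientedIncidence s(u, v) u := by
  simp only [WithLp.ofLp_sum, WithLp.ofLp_smul, Finset.sum_apply, Pi.smul_apply, smul_eq_mul]
  rw [← sum_incidenceFinset_eq_sum_neighborFinset G (fun e => σ e * orientedIncidence e u),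
    sum_subset (G.incidenceFinset_subset u)]
  intro e he hu
  rw [orientedIncidence_apply_of_notMem fun h => hu ?_, mul_zero]
  exact (G.mem_incidenceFinset _ _).mpr ⟨mem_edgeFinset.mp he, h⟩

end SimpleGraph

open SimpleGraph in
theorem exists_isLoad_two_mul_card_edgeFinset_le {V : Type*} [Fintype V] [DecidableEq V]
    (G : SimpleGraph V) [DecidableRel G.Adj] :
    ∃ b s : V → ℝ, IsLoad G b ∧ IsLoad G s ∧
      2 * (#G.edgeFinset : ℝ) ≤ ∑ u, (s u - b u) ^ 2 := by
  obtain ⟨σ, hσ, hle⟩ := exists_sign_sum_smul_norm_sq_ge G.edgeFinset orientedIncidence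
  obtain ⟨b, s, hb, hs, hsb⟩ := exists_isLoad_sub_eq_sum G
    (fun u v => σ s(u, v) * orientedIncidence s(u, v) u)
    (fun u v huv => by
      rw [Sym2.eq_swap (a := v), ← mul_add, orientedIncidence_apply_add_apply huv.ne, mul_zero])
    (fun u v _ => by rw [abs_mul, hσ, one_mul]; exact abs_orientedIncidence_apply_le _ _)
  refine ⟨b, s, hb, hs, ?_⟩
  calc 2 * (#G.edgeFinset : ℝ) = ∑ _e ∈ G.edgeFinset, 2 := by simp [mul_comm]
    _ ≤ ∑ e ∈ G.edgeFinset, ‖orientedIncidence e‖ ^ 2 := sum_le_sum fun e he =>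
        two_le_norm_sq_orientedIncidence (G.not_isDiag_of_mem_edgeSet (mem_edgeFinset.mp he))
    _ ≤ ‖∑ e ∈ G.edgeFinset, σ e • orientedIncidence e‖ ^ 2 := hle
    _ = ∑ u, (s u - b u) ^ 2 := by
        simp [EuclideanSpace.norm_sq_eq, sum_smul_orientedIncidence_apply, hsb]

/-- For the quadratic `f(b) = Σ b_u²` over fractional-orientation load vectors,
the curvature constant `C_f = sup 2‖s - x‖²` satisfies
`2m ≤ C_f ≤ 2 Σ_u deg(u)²`. -/
theorem stmt14 {V : Type*} [Fintype V] [DecidableEq V]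
    (G : SimpleGraph V) [DecidableRel G.Adj] :
    (∀ b s : V → ℝ, IsLoad G b → IsLoad G s →
      2 * ∑ u, (s u - b u) ^ 2 ≤ 2 * ∑ u, ((G.degree u : ℝ)) ^ 2) ∧
    (∃ b s : V → ℝ, IsLoad G b ∧ IsLoad G s ∧
      2 * (G.edgeFinset.card : ℝ) ≤ 2 * ∑ u, (s u - b u) ^ 2) := by
  refine ⟨fun b s hb hs => ?_, ?_⟩
  · refine mul_le_mul_of_nonneg_left (sum_le_sum fun u _ => ?_) zero_le_two
    exact sq_le_sq' (by linarith [hb.le_degree u, hs.nonneg u])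
      (by linarith [hs.le_degree u, hb.nonneg u])
  · obtain ⟨b, s, hb, hs, hle⟩ := exists_isLoad_two_mul_card_edgeFinset_le G
    exact ⟨b, s, hb, hs, hle.trans (le_mul_of_one_le_left (by positivity) one_le_two)⟩
end

section
/- Let G = (V, E) be a connected graph and r the rank function of its graphic matroid. The edge weights assigned by the deletion-based dense decomposition of r coincide with Thorup's ideal loads ℓ*: in the first level, the minimal set S₁ ⊆ E minimizing (|E| - |S|)/(r(E) - r(S)) is the complement of the edges crossing the Tutte–Nash-Williams partition P of G, and (r(E) - r(S₁))/(|E| - |S₁|) = 1/τ(G), where τ(G) = min_P |E(P)|/(|P| - 1) over all partitions P of V with at least 2 parts. -/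
/-!
The components of `S₁` form a partition `P` with `r(E) - r(S₁) = |P| - 1` whose crossing edges
all lie outside `S₁`, so `τ ≤ |E(P)|/(|P| - 1) ≤ (|E| - |S₁|)/(r(E) - r(S₁))`. Conversely, deleting
the crossing edges of any partition `P'` leaves at least `|P'|` components, so the minimality of
`S₁` bounds its ratio by `|E(P')|/(|P'| - 1)`, which is `τ` for an optimal `P'`. Equality
throughout forces `E(P) = E \ S₁`.
-/
open Finset

namespace Finpartition

variable {V : Type*} [Fintype V] [DecidableEq V]

def ofCover (P : Finset (Finset V)) (hne : ∀ p ∈ P, p.Nonempty) (hcover : ∀ v, ∃ p ∈ P, v ∈ p)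
    (hdisj : (P : Set (Finset V)).PairwiseDisjoint id) : Finpartition (univ : Finset V) where
  parts := P
  supIndep := hdisj.supIndep
  sup_parts := eq_univ_of_forall fun v => by simpa only [mem_sup, id] using hcover v
  bot_notMem h := (hne ⊥ h).ne_empty rfl

theorem exists_parts_eq_iff {P : Finset (Finset V)} :
    (∃ Q : Finpartition (univ : Finset V), Q.parts = P) ↔
      (∀ p ∈ P, p.Nonempty) ∧ (∀ v : V, ∃ p ∈ P, v ∈ p) ∧
        (∀ p ∈ P, ∀ q ∈ P, p ≠ q → p ∩ q = ∅) := by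
  constructor
  · rintro ⟨Q, rfl⟩
    exact ⟨fun p => Q.nonempty_of_mem_parts,
      fun v => ⟨Q.part v, Q.part_mem.2 (mem_univ v), Q.mem_part_self.2 (mem_univ v)⟩,
      fun p hp q hq hpq => disjoint_iff_inter_eq_empty.1 (Q.disjoint hp hq hpq)⟩
  · rintro ⟨hne, hcover, hdisj⟩
    exact ⟨ofCover P hne hcover
      fun p hp q hq hpq => disjoint_iff_inter_eq_empty.2 (hdisj p hp q hq hpq), rfl⟩

theorem exists_mem_parts_forall_mem_sym2_iff (Q : Finpartition (univ : Finset V)) {x y : V} :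
    (∃ p ∈ Q.parts, ∀ v ∈ s(x, y), v ∈ p) ↔ Q.part x = Q.part y := by
  constructor
  · rintro ⟨p, hp, hxy⟩
    rw [Q.part_eq_of_mem hp (hxy x (Sym2.mem_mk_left x y)),
      Q.part_eq_of_mem hp (hxy y (Sym2.mem_mk_right x y))]
  · intro hxy
    refine ⟨Q.part x, Q.part_mem.2 (mem_univ x), fun v hv => ?_⟩
    rcases Sym2.mem_iff.1 hv with rfl | rfl
    · exact Q.mem_part_self.2 (mem_univ v)
    · exact hxy ▸ Q.mem_part_self.2 (mem_univ v)

theorem part_eq_part_of_reachable (Q : Finpartition (univ : Finset V)) {H : SimpleGraph V}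
    (hH : ∀ ⦃x y⦄, H.Adj x y → Q.part x = Q.part y) {x y : V} (h : H.Reachable x y) :
    Q.part x = Q.part y := by
  rw [SimpleGraph.reachable_iff_reflTransGen] at h
  induction h with
  | refl => rfl
  | tail _ hadj ih => exact ih.trans (hH hadj)

theorem card_parts_le_nat_card_connectedComponent (Q : Finpartition (univ : Finset V))
    {H : SimpleGraph V} (hH : ∀ ⦃x y⦄, H.Adj x y → Q.part x = Q.part y) :
    #Q.parts ≤ Nat.card H.ConnectedComponent := by
  classical
  rw [Nat.card_eq_fintype_card, ← card_univ]
  refine card_le_card_of_surjOn (fun c => Q.part (Quot.out c)) fun p hp => ?_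
  obtain ⟨v, hv⟩ := Q.nonempty_of_mem_parts hp
  refine ⟨H.connectedComponentMk v, mem_coe.2 (mem_univ _), ?_⟩
  rw [← Q.part_eq_of_mem hp hv]
  exact Q.part_eq_part_of_reachable hH (SimpleGraph.ConnectedComponent.exact (Quot.out_eq _))

end Finpartition

namespace SimpleGraph

theorem Connected.nat_card_connectedComponent {V : Type*} {G : SimpleGraph V} (h : G.Connected) :
    Nat.card G.ConnectedComponent = 1 :=
  Nat.card_eq_one_iff_unique.2 ⟨h.preconnected.subsingleton_connectedComponent,
    h.nonempty.map G.connectedComponentMk⟩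

variable {V : Type*} [Fintype V] [DecidableEq V]

open Classical in
noncomputable def componentFinpartition (H : SimpleGraph V) : Finpartition (univ : Finset V) :=
  Finpartition.ofSetoid H.reachableSetoid

theorem part_componentFinpartition_eq_iff (H : SimpleGraph V) {x y : V} :
    H.componentFinpartition.part x = H.componentFinpartition.part y ↔ H.Reachable x y := by
  classical
  rw [← Finpartition.mem_part_iff_part_eq_part _ (mem_univ x) (mem_univ y), componentFinpartition,
    Finpartition.mem_part_ofSetoid_iff_rel, reachable_comm]
  rfl

theorem card_parts_componentFinpartition (H : SimpleGraph V) :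
    #H.componentFinpartition.parts = Nat.card H.ConnectedComponent := by
  classical
  refine le_antisymm (H.componentFinpartition.card_parts_le_nat_card_connectedComponent
    fun x y hxy => (part_componentFinpartition_eq_iff H).2 hxy.reachable) ?_
  rw [Nat.card_eq_fintype_card, ← card_univ]
  refine card_le_card_of_injOn (fun c => H.componentFinpartition.part (Quot.out c))
    (fun c _ => Finpartition.part_mem _ |>.2 (mem_univ _)) fun c _ d _ hcd => ?_
  rw [← Quot.out_eq c, ← Quot.out_eq d]
  exact ConnectedComponent.sound ((part_componentFinpartition_eq_iff H).1 hcd)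

theorem exists_mem_parts_componentFinpartition_fromEdgeSet {S : Set (Sym2 V)} {e : Sym2 V}
    (he : e ∈ S) (hdiag : ¬e.IsDiag) :
    ∃ p ∈ (fromEdgeSet S).componentFinpartition.parts, ∀ v ∈ e, v ∈ p := by
  induction e using Sym2.ind with
  | _ x y =>
    rw [Finpartition.exists_mem_parts_forall_mem_sym2_iff, part_componentFinpartition_eq_iff]
    exact ((fromEdgeSet_adj S).2 ⟨he, hdiag⟩).reachable

variable (G : SimpleGraph V) [DecidableRel G.Adj]

def crossingEdgeFinset (P : Finset (Finset V)) : Finset (Sym2 V) :=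
  G.edgeFinset.filter fun e => ¬∃ p ∈ P, ∀ v ∈ e, v ∈ p

theorem crossingEdgeFinset_subset (P : Finset (Finset V)) :
    G.crossingEdgeFinset P ⊆ G.edgeFinset :=
  filter_subset _ _

theorem crossingEdgeFinset_componentFinpartition_subset (S : Finset (Sym2 V)) :
    G.crossingEdgeFinset (fromEdgeSet (S : Set (Sym2 V))).componentFinpartition.parts ⊆
      G.edgeFinset \ S := by
  intro e he
  rw [crossingEdgeFinset, mem_filter] at he
  refine mem_sdiff.2 ⟨he.1, fun heS => he.2 ?_⟩
  exact exists_mem_parts_componentFinpartition_fromEdgeSet (mem_coe.2 heS)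
    (G.not_isDiag_of_mem_edgeSet (mem_edgeFinset.1 he.1))

end SimpleGraph

open SimpleGraph

noncomputable def graphicRank {V : Type*} [Fintype V] (S : Finset (Sym2 V)) : ℝ :=
  Fintype.card V - Nat.card (fromEdgeSet (S : Set (Sym2 V))).ConnectedComponent

section GraphicRank

variable {V : Type*} [Fintype V]

theorem graphicRank_edgeFinset {G : SimpleGraph V} [DecidableRel G.Adj] (hG : G.Connected) :
    graphicRank G.edgeFinset = Fintype.card V - 1 := by
  rw [graphicRank, coe_edgeFinset, fromEdgeSet_edgeSet, hG.nat_card_connectedComponent,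
    Nat.cast_one]

variable [DecidableEq V]

theorem graphicRank_le_of_forall_exists_mem_parts (Q : Finpartition (univ : Finset V))
    {T : Finset (Sym2 V)} (hT : ∀ e ∈ T, ∃ p ∈ Q.parts, ∀ v ∈ e, v ∈ p) :
    graphicRank T ≤ Fintype.card V - #Q.parts := by
  refine sub_le_sub_left (Nat.cast_le.2 <| Q.card_parts_le_nat_card_connectedComponent
    fun x y hxy => ?_) _
  exact Q.exists_mem_parts_forall_mem_sym2_iff.1 (hT _ ((fromEdgeSet_adj _).1 hxy).1)

theorem graphicRank_eq_card_sub_card_parts_componentFinpartition (S : Finset (Sym2 V)) :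
    graphicRank S =
      Fintype.card V - #(fromEdgeSet (S : Set (Sym2 V))).componentFinpartition.parts := by
  rw [graphicRank, card_parts_componentFinpartition]

theorem div_graphicRank_le_card_crossingEdgeFinset_div {G : SimpleGraph V} [DecidableRel G.Adj]
    (hG : G.Connected) {S : Finset (Sym2 V)}
    (hmin : ∀ T ⊆ G.edgeFinset, graphicRank T < graphicRank G.edgeFinset →
      ((#G.edgeFinset : ℝ) - #S) / (graphicRank G.edgeFinset - graphicRank S) ≤
        ((#G.edgeFinset : ℝ) - #T) / (graphicRank G.edgeFinset - graphicRank T))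
    (Q : Finpartition (univ : Finset V)) (hQ : 2 ≤ #Q.parts) :
    ((#G.edgeFinset : ℝ) - #S) / (graphicRank G.edgeFinset - graphicRank S) ≤
      #(G.crossingEdgeFinset Q.parts) / ((#Q.parts : ℝ) - 1) := by
  set T := G.edgeFinset \ G.crossingEdgeFinset Q.parts
  have hcross := G.crossingEdgeFinset_subset Q.parts
  have hrkT : graphicRank T ≤ Fintype.card V - #Q.parts :=
    graphicRank_le_of_forall_exists_mem_parts Q fun e he => by
      rw [mem_sdiff, crossingEdgeFinset, mem_filter, not_and, not_not] at he
      exact he.2 he.1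
  have hQ' : (2 : ℝ) ≤ #Q.parts := by exact_mod_cast hQ
  have hgap : (#Q.parts : ℝ) - 1 ≤ graphicRank G.edgeFinset - graphicRank T := by
    rw [graphicRank_edgeFinset hG]; linarith
  calc _ ≤ ((#G.edgeFinset : ℝ) - #T) / (graphicRank G.edgeFinset - graphicRank T) :=
        hmin T sdiff_subset (by linarith)
    _ = #(G.crossingEdgeFinset Q.parts) / (graphicRank G.edgeFinset - graphicRank T) := by
        rw [card_sdiff_of_subset hcross, Nat.cast_sub (card_le_card hcross), sub_sub_cancel]
    _ ≤ _ := div_le_div_of_nonneg_left (Nat.cast_nonneg _) (by linarith) hgap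

end GraphicRank

theorem eq_and_div_eq_of_le_div_of_div_le {a b d τ : ℝ} (hd : 0 < d) (hab : a ≤ b)
    (hτa : τ ≤ a / d) (hbτ : b / d ≤ τ) : a = b ∧ b / d = τ := by
  have := div_le_div_of_nonneg_right hab hd.le
  refine ⟨(div_left_inj' hd.ne').1 (by linarith), by linarith⟩

open Classical in
theorem stmt16_general {V : Type*} [Fintype V] [DecidableEq V]
    (G : SimpleGraph V) [DecidableRel G.Adj] (hconn : G.Connected)
    -- the rank function of the graphic matroid: `r(X) = |V| - κ(X)`
    (r : Finset (Sym2 V) → ℝ)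
    (hr : ∀ S : Finset (Sym2 V),
      r S = (Fintype.card V : ℝ) -
        (Nat.card (SimpleGraph.fromEdgeSet (↑S : Set (Sym2 V))).ConnectedComponent : ℝ))
    -- partitions of `V` with at least two parts
    (IsPartition : Finset (Finset V) → Prop)
    (hPart : ∀ P : Finset (Finset V), IsPartition P ↔
      ((∀ p ∈ P, p.Nonempty) ∧ (∀ v : V, ∃ p ∈ P, v ∈ p) ∧
        (∀ p ∈ P, ∀ q ∈ P, p ≠ q → p ∩ q = ∅) ∧ 2 ≤ P.card))
    -- edges crossing a partition
    (cross : Finset (Finset V) → Finset (Sym2 V))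
    (hcross : ∀ P : Finset (Finset V),
      cross P = G.edgeFinset.filter fun e => ¬ ∃ p ∈ P, ∀ v : V, v ∈ e → v ∈ p)
    -- `τ` is the minimum partition strength, attained by some partition
    (τ : ℝ)
    (hτmin : ∀ P : Finset (Finset V), IsPartition P →
      τ ≤ ((cross P).card : ℝ) / ((P.card : ℝ) - 1))
    (hτatt : ∃ P : Finset (Finset V), IsPartition P ∧
      ((cross P).card : ℝ) / ((P.card : ℝ) - 1) = τ)
    -- `S₁` is a minimizer of `(|E|-|S|)/(r(E)-r(S))` over `S ⊆ E` with `r(S) < r(E)` ...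
    (S₁ : Finset (Sym2 V)) (hS₁sub : S₁ ⊆ G.edgeFinset)
    (hS₁rank : r S₁ < r G.edgeFinset)
    (hS₁min : ∀ T ⊆ G.edgeFinset, r T < r G.edgeFinset →
      ((G.edgeFinset.card : ℝ) - S₁.card) / (r G.edgeFinset - r S₁) ≤
        ((G.edgeFinset.card : ℝ) - T.card) / (r G.edgeFinset - r T)) :
    ∃ P : Finset (Finset V), IsPartition P ∧
      ((cross P).card : ℝ) / ((P.card : ℝ) - 1) = τ ∧
      S₁ = G.edgeFinset \ cross P ∧
      (r G.edgeFinset - r S₁) / ((G.edgeFinset.card : ℝ) - S₁.card) = 1 / τ := by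
  classical
  obtain rfl : r = graphicRank := funext hr
  obtain rfl : cross = G.crossingEdgeFinset := funext hcross
  obtain rfl : IsPartition =
      fun P => (∃ Q : Finpartition (univ : Finset V), Q.parts = P) ∧ 2 ≤ #P :=
    funext fun P => propext <| by
      rw [hPart, Finpartition.exists_parts_eq_iff]; simp only [and_assoc]
  obtain ⟨P₀, ⟨⟨Q₀, rfl⟩, hQ₀⟩, rfl⟩ := hτatt
  set Q := (fromEdgeSet (S₁ : Set (Sym2 V))).componentFinpartition
  have hgap : graphicRank G.edgeFinset - graphicRank S₁ = (#Q.parts : ℝ) - 1 := by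
    rw [graphicRank_edgeFinset hconn, graphicRank_eq_card_sub_card_parts_componentFinpartition]
    ring
  have hQ : 2 ≤ #Q.parts := by
    have : (1 : ℝ) < #Q.parts := by linarith [sub_pos.2 hS₁rank]
    exact_mod_cast this
  have hcrossQ := G.crossingEdgeFinset_componentFinpartition_subset S₁
  have hcard : (#(G.edgeFinset \ S₁) : ℝ) = #G.edgeFinset - #S₁ := by
    rw [card_sdiff_of_subset hS₁sub, Nat.cast_sub (card_le_card hS₁sub)]
  obtain ⟨hcrossQ_card, hτ⟩ := eq_and_div_eq_of_le_div_of_div_le (by linarith [sub_pos.2 hS₁rank])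
    (hcard ▸ Nat.cast_le.2 (card_le_card hcrossQ)) (hτmin _ ⟨⟨Q, rfl⟩, hQ⟩)
    (hgap ▸ div_graphicRank_le_card_crossingEdgeFinset_div hconn hS₁min Q₀ hQ₀)
  have hcrossQ_eq : G.crossingEdgeFinset Q.parts = G.edgeFinset \ S₁ :=
    eq_of_subset_of_card_le hcrossQ (by exact_mod_cast (hcard.trans hcrossQ_card.symm).le)
  refine ⟨Q.parts, ⟨⟨Q, rfl⟩, hQ⟩, hcrossQ_card ▸ hτ, ?_, ?_⟩
  · rw [hcrossQ_eq, Finset.sdiff_sdiff_eq_self hS₁sub]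
  · rw [hgap, ← hτ, one_div_div]

open Classical in
/-- The first level of the deletion-based dense decomposition of the graphic
matroid rank function coincides with Thorup's ideal loads: the unique minimal
minimizer `S₁` of `(|E|-|S|)/(r(E)-r(S))` is the complement of the edges
crossing a Tutte–Nash-Williams (strength-minimizing) partition `P`, and the
density `(r(E)-r(S₁))/(|E|-|S₁|)` equals `1/τ(G)`. -/
theorem stmt16 {V : Type*} [Fintype V] [DecidableEq V]
    (G : SimpleGraph V) [DecidableRel G.Adj] (hconn : G.Connected)
    -- the rank function of the graphic matroid: `r(X) = |V| - κ(X)`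
    (r : Finset (Sym2 V) → ℝ)
    (hr : ∀ S : Finset (Sym2 V),
      r S = (Fintype.card V : ℝ) -
        (Nat.card (SimpleGraph.fromEdgeSet (↑S : Set (Sym2 V))).ConnectedComponent : ℝ))
    -- partitions of `V` with at least two parts
    (IsPartition : Finset (Finset V) → Prop)
    (hPart : ∀ P : Finset (Finset V), IsPartition P ↔
      ((∀ p ∈ P, p.Nonempty) ∧ (∀ v : V, ∃ p ∈ P, v ∈ p) ∧
        (∀ p ∈ P, ∀ q ∈ P, p ≠ q → p ∩ q = ∅) ∧ 2 ≤ P.card))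
    -- edges crossing a partition
    (cross : Finset (Finset V) → Finset (Sym2 V))
    (hcross : ∀ P : Finset (Finset V),
      cross P = G.edgeFinset.filter fun e => ¬ ∃ p ∈ P, ∀ v : V, v ∈ e → v ∈ p)
    -- `τ` is the minimum partition strength, attained by some partition
    (τ : ℝ)
    (hτmin : ∀ P : Finset (Finset V), IsPartition P →
      τ ≤ ((cross P).card : ℝ) / ((P.card : ℝ) - 1))
    (hτatt : ∃ P : Finset (Finset V), IsPartition P ∧
      ((cross P).card : ℝ) / ((P.card : ℝ) - 1) = τ)
    -- `S₁` is a minimizer of `(|E|-|S|)/(r(E)-r(S))` over `S ⊆ E` with `r(S) < r(E)` ...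
    (S₁ : Finset (Sym2 V)) (hS₁sub : S₁ ⊆ G.edgeFinset)
    (hS₁rank : r S₁ < r G.edgeFinset)
    (hS₁min : ∀ T ⊆ G.edgeFinset, r T < r G.edgeFinset →
      ((G.edgeFinset.card : ℝ) - S₁.card) / (r G.edgeFinset - r S₁) ≤
        ((G.edgeFinset.card : ℝ) - T.card) / (r G.edgeFinset - r T))
    -- ... and is minimal with respect to inclusion among such minimizers
    (hS₁minimal : ∀ T ⊆ G.edgeFinset, r T < r G.edgeFinset →
      ((G.edgeFinset.card : ℝ) - T.card) / (r G.edgeFinset - r T) =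
        ((G.edgeFinset.card : ℝ) - S₁.card) / (r G.edgeFinset - r S₁) →
      T ⊆ S₁ → T = S₁) :
    ∃ P : Finset (Finset V), IsPartition P ∧
      ((cross P).card : ℝ) / ((P.card : ℝ) - 1) = τ ∧
      S₁ = G.edgeFinset \ cross P ∧
      (r G.edgeFinset - r S₁) / ((G.edgeFinset.card : ℝ) - S₁.card) = 1 / τ :=
  stmt16_general G hconn r hr IsPartition hPart cross hcross τ hτmin hτatt S₁ hS₁sub hS₁rank hS₁min
end

section
/- Let f : 2^V → ℝ≥0 be a monotone submodular function with f(∅) = 0, and let Ŝ₁,...,Ŝ_k with densities λ₁ < ... < λ_k be its deletion-based dense decomposition, and T₁,...,T_{k'} with densities λ̂₁ > ... > λ̂_{k'} be the contraction-based dense decomposition of the supermodular function g(X) = f(V) - f(V \ X). Then k = k', Ŝ_i = T_i for each i, and λ̂_i = 1/λ_i. -/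
open Finset

/-!
Put `U = V \ X`. Since `g(A ∪ U) - g(U) = f(X) - f(X \ A)`, the contraction density of
`A ⊆ X` over `U` is exactly the reciprocal of the deletion ratio of `X \ A` inside `X`.
Hence, level by level, minimizing the deletion ratio over `T = X \ A` is maximizing the
contraction density over `A`, the minimal minimizer `S_i` corresponds to the maximal
maximizer `T_i = S_{i-1} \ S_i`, and the optimal values are reciprocal. Induction on the
level then shows `U_i = V \ S_i` throughout, which forces both chains to end together.
-/

namespace DenseDecomposition

variable {V : Type*}

noncomputable def deletionRatio (f : Finset V → ℝ) (X T : Finset V) : ℝ :=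
  ((X.card : ℝ) - T.card) / (f X - f T)

def IsDeletionStep (f : Finset V → ℝ) (X Y : Finset V) : Prop :=
  Y ⊂ X ∧ f Y < f X ∧
    (∀ T ⊆ X, f T < f X → deletionRatio f X Y ≤ deletionRatio f X T) ∧
    (∀ T ⊆ X, f T < f X → deletionRatio f X T = deletionRatio f X Y → T ⊆ Y → T = Y)

theorem deletionRatio_pos {f : Finset V → ℝ} {X Y : Finset V} (h : IsDeletionStep f X Y) :
    0 < deletionRatio f X Y := by
  have hcard : (Y.card : ℝ) < X.card := by exact_mod_cast card_lt_card h.1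
  exact div_pos (sub_pos.2 hcard) (sub_pos.2 h.2.1)

variable [DecidableEq V]

noncomputable def contractionDensity (g : Finset V → ℝ) (U A : Finset V) : ℝ :=
  (g (A ∪ U) - g U) / (A.card : ℝ)

theorem deletionRatio_sdiff {f : Finset V → ℝ} {X A : Finset V} (hA : A ⊆ X) :
    deletionRatio f X (X \ A) = 1 / ((f X - f (X \ A)) / A.card) := by
  rw [deletionRatio, one_div_div, card_sdiff_of_subset hA, Nat.cast_sub (card_le_card hA)]
  ring

variable [Fintype V]

def IsContractionStep (g : Finset V → ℝ) (U P : Finset V) (μ : ℝ) : Prop :=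
  P ⊆ univ \ U ∧ P.Nonempty ∧ contractionDensity g U P = μ ∧
    (∀ A ⊆ univ \ U, A.Nonempty → contractionDensity g U A ≤ μ) ∧
    (∀ A ⊆ univ \ U, A.Nonempty → contractionDensity g U A = μ → A ⊆ P)

variable {f g : Finset V → ℝ}

theorem contractionDensity_compl (hg : ∀ X, g X = f univ - f (univ \ X)) (X A : Finset V) :
    contractionDensity g (univ \ X) A = (f X - f (X \ A)) / A.card := by
  have hA : univ \ (A ∪ (univ \ X)) = X \ A := by
    ext x
    simp only [mem_sdiff, mem_union, mem_univ, true_and]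
    tauto
  rw [contractionDensity, hg, hg, hA, Finset.sdiff_sdiff_eq_self (subset_univ X)]
  ring_nf

theorem IsDeletionStep.sdiff_eq_of_isContractionStep
    (hg : ∀ X, g X = f univ - f (univ \ X)) {X Y P : Finset V} {μ : ℝ}
    (hdel : IsDeletionStep f X Y) (hcon : IsContractionStep g (univ \ X) P μ) :
    X \ Y = P ∧ μ = 1 / deletionRatio f X Y := by
  obtain ⟨hYX, -, hmin, huniq⟩ := id hdel
  obtain ⟨hPX, hPne, hPμ, hmax, hmaximal⟩ := hcon
  rw [Finset.sdiff_sdiff_eq_self (subset_univ X)] at hPX hmax hmaximal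
  simp only [contractionDensity_compl hg] at hPμ hmax hmaximal
  set r := deletionRatio f X Y
  have hr : 0 < r := deletionRatio_pos hdel
  have hXY : X \ (X \ Y) = Y := Finset.sdiff_sdiff_eq_self hYX.subset
  have hrY : r = 1 / ((f X - f Y) / (X \ Y).card) := by
    simpa only [hXY] using deletionRatio_sdiff (f := f) (sdiff_subset : X \ Y ⊆ X)
  have hYne : (X \ Y).Nonempty := sdiff_nonempty.2 (not_subset.2 (exists_of_ssubset hYX))
  have hYμ : 1 / r ≤ μ := by
    rw [hrY, one_div_one_div]
    simpa only [hXY] using hmax _ sdiff_subset hYne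
  have hμ : 0 < μ := (one_div_pos.2 hr).trans_le hYμ
  have hrP : deletionRatio f X (X \ P) = 1 / μ := by rw [deletionRatio_sdiff hPX, hPμ]
  have hfP : f (X \ P) < f X := by
    rw [← hPμ] at hμ
    exact sub_pos.1 ((div_pos_iff_of_pos_right (by exact_mod_cast hPne.card_pos)).1 hμ)
  have hrμ : r ≤ 1 / μ := hrP ▸ hmin _ sdiff_subset hfP
  have hμr : μ = 1 / r := by
    rw [le_div_iff₀ hμ] at hrμ
    rw [div_le_iff₀ hr] at hYμ
    field_simp
    linarith
  have hYP : X \ Y ⊆ P := hmaximal _ sdiff_subset hYne (by rw [hXY, hμr, hrY, one_div_one_div])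
  have hPY : X \ P = Y :=
    huniq _ sdiff_subset hfP (by rw [hrP, hμr, one_div_one_div])
      (hXY ▸ sdiff_subset_sdiff subset_rfl hYP)
  exact ⟨by rw [← hPY, Finset.sdiff_sdiff_eq_self hPX], hμr⟩

theorem eq_univ_sdiff_of_sdiff_eq {S U T : ℕ → Finset V} {n : ℕ} (hS0 : S 0 = univ)
    (hU0 : U 0 = ∅) (hUsucc : ∀ i, U (i+1) = U i ∪ T i) (hS : ∀ i < n, S (i+1) ⊆ S i)
    (hT : ∀ i < n, U i = univ \ S i → S i \ S (i+1) = T i) :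
    ∀ i ≤ n, U i = univ \ S i := by
  intro i
  induction i with
  | zero => simp [hU0, hS0]
  | succ i ih =>
    intro hi
    have hUi := ih (by omega)
    rw [hUsucc, hUi, ← hT i hi hUi]
    ext x
    have := @hS i hi x
    simp only [mem_union, mem_sdiff, mem_univ, true_and]
    tauto

end DenseDecomposition

open DenseDecomposition

theorem stmt18_general {V : Type*} [Fintype V] [DecidableEq V]
    (f : Finset V → ℝ)
    -- the supermodular function `g(X) = f(V) - f(V \ X)`
    (g : Finset V → ℝ) (hg : ∀ X : Finset V, g X = f univ - f (univ \ X))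
    -- deletion-based decomposition: a chain `V = S 0 ⊋ S 1 ⊋ ⋯ ⊋ S k = ∅`;
    -- `Ŝ_{i+1} = S i \ S (i+1)` with density `lam i`
    (k : ℕ) (S : ℕ → Finset V) (lam : ℕ → ℝ)
    (hS0 : S 0 = univ) (hSk : S k = ∅)
    (hdel : ∀ i < k, S (i+1) ⊂ S i ∧ f (S (i+1)) < f (S i) ∧
      (∀ T ⊆ S i, f T < f (S i) →
        (((S i).card : ℝ) - (S (i+1)).card) / (f (S i) - f (S (i+1))) ≤
          (((S i).card : ℝ) - T.card) / (f (S i) - f T)) ∧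
      (∀ T ⊆ S i, f T < f (S i) →
        (((S i).card : ℝ) - T.card) / (f (S i) - f T) =
          (((S i).card : ℝ) - (S (i+1)).card) / (f (S i) - f (S (i+1))) →
        T ⊆ S (i+1) → T = S (i+1)))
    (hlam : ∀ i < k,
      lam i = (((S i).card : ℝ) - (S (i+1)).card) / (f (S i) - f (S (i+1))))
    -- contraction-based decomposition of `g`: parts `T 0, …, T (k'-1)` with
    -- prefix unions `U i` and densities `lamhat i`
    (k' : ℕ) (T U : ℕ → Finset V) (lamhat : ℕ → ℝ)
    (hU0 : U 0 = ∅) (hUsucc : ∀ i, U (i+1) = U i ∪ T i) (hUk : U k' = univ)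
    (hcon : ∀ i < k', T i ⊆ univ \ U i ∧ (T i).Nonempty ∧
      (g (T i ∪ U i) - g (U i)) / ((T i).card : ℝ) = lamhat i ∧
      (∀ A ⊆ univ \ U i, A.Nonempty →
        (g (A ∪ U i) - g (U i)) / (A.card : ℝ) ≤ lamhat i) ∧
      (∀ A ⊆ univ \ U i, A.Nonempty →
        (g (A ∪ U i) - g (U i)) / (A.card : ℝ) = lamhat i → A ⊆ T i)) :
    k = k' ∧ (∀ i < k, S i \ S (i+1) = T i) ∧ (∀ i < k, lamhat i = 1 / lam i) := by
  have hstep : ∀ i < k, i < k' → U i = univ \ S i →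
      S i \ S (i+1) = T i ∧ lamhat i = 1 / lam i := by
    intro i hik hik' hU
    rw [hlam i hik]
    exact IsDeletionStep.sdiff_eq_of_isContractionStep hg (hdel i hik) (hU ▸ hcon i hik')
  have hU : ∀ i ≤ min k k', U i = univ \ S i :=
    eq_univ_sdiff_of_sdiff_eq hS0 hU0 hUsucc (fun i hi => (hdel i (lt_min_iff.1 hi).1).1.subset)
      (fun i hi hUi => (hstep i (lt_min_iff.1 hi).1 (lt_min_iff.1 hi).2 hUi).1)
  have hkk : k = k' := by
    rcases lt_trichotomy k k' with h | h | h
    · have hT := (hcon k h).1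
      rw [hU k (by omega), hSk, sdiff_empty, Finset.sdiff_self, subset_empty] at hT
      exact absurd hT (hcon k h).2.1.ne_empty
    · exact h
    · have hS' : univ \ S k' = univ := (hU k' (by omega)).symm.trans hUk
      rw [← compl_eq_univ_sdiff, compl_eq_univ_iff] at hS'
      exact absurd (hS' ▸ (hdel k' h).1) (not_ssubset_empty _)
  subst hkk
  exact ⟨rfl, fun i hi => (hstep i hi hi (hU i (by omega))).1,
    fun i hi => (hstep i hi hi (hU i (by omega))).2⟩

/-- The deletion-based dense decomposition of a normalized monotone submodular
function `f` coincides with the contraction-based dense decomposition of the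
supermodular function `g(X) = f(V) - f(V \ X)`: the number of levels agree,
the parts agree, and the densities are reciprocals of each other. -/
theorem stmt18 {V : Type*} [Fintype V] [DecidableEq V]
    (f : Finset V → ℝ) (hnn : ∀ S : Finset V, 0 ≤ f S)
    (hnorm : f ∅ = 0)
    (hmono : ∀ A B : Finset V, A ⊆ B → f A ≤ f B)
    (hsub : ∀ A B : Finset V, f (A ∪ B) + f (A ∩ B) ≤ f A + f B)
    -- the supermodular function `g(X) = f(V) - f(V \ X)`
    (g : Finset V → ℝ) (hg : ∀ X : Finset V, g X = f univ - f (univ \ X))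
    -- deletion-based decomposition: a chain `V = S 0 ⊋ S 1 ⊋ ⋯ ⊋ S k = ∅`;
    -- `Ŝ_{i+1} = S i \ S (i+1)` with density `lam i`
    (k : ℕ) (S : ℕ → Finset V) (lam : ℕ → ℝ)
    (hS0 : S 0 = univ) (hSk : S k = ∅)
    (hdel : ∀ i < k, S (i+1) ⊂ S i ∧ f (S (i+1)) < f (S i) ∧
      (∀ T ⊆ S i, f T < f (S i) →
        (((S i).card : ℝ) - (S (i+1)).card) / (f (S i) - f (S (i+1))) ≤
          (((S i).card : ℝ) - T.card) / (f (S i) - f T)) ∧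
      (∀ T ⊆ S i, f T < f (S i) →
        (((S i).card : ℝ) - T.card) / (f (S i) - f T) =
          (((S i).card : ℝ) - (S (i+1)).card) / (f (S i) - f (S (i+1))) →
        T ⊆ S (i+1) → T = S (i+1)))
    (hlam : ∀ i < k,
      lam i = (((S i).card : ℝ) - (S (i+1)).card) / (f (S i) - f (S (i+1))))
    -- contraction-based decomposition of `g`: parts `T 0, …, T (k'-1)` with
    -- prefix unions `U i` and densities `lamhat i`
    (k' : ℕ) (T U : ℕ → Finset V) (lamhat : ℕ → ℝ)
    (hU0 : U 0 = ∅) (hUsucc : ∀ i, U (i+1) = U i ∪ T i) (hUk : U k' = univ)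
    (hcon : ∀ i < k', T i ⊆ univ \ U i ∧ (T i).Nonempty ∧
      (g (T i ∪ U i) - g (U i)) / ((T i).card : ℝ) = lamhat i ∧
      (∀ A ⊆ univ \ U i, A.Nonempty →
        (g (A ∪ U i) - g (U i)) / (A.card : ℝ) ≤ lamhat i) ∧
      (∀ A ⊆ univ \ U i, A.Nonempty →
        (g (A ∪ U i) - g (U i)) / (A.card : ℝ) = lamhat i → A ⊆ T i)) :
    k = k' ∧ (∀ i < k, S i \ S (i+1) = T i) ∧ (∀ i < k, lamhat i = 1 / lam i) :=
  stmt18_general f g hg k S lam hS0 hSk hdel hlam k' T U lamhat hU0 hUsucc hUk hcon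
end

section
/- Let f : 2^V → ℝ≥0 be a normalized monotone supermodular function and w ∈ ℝ^V. Let d̂ be the output of the weighted super-greedy peeling (repeatedly remove u ∈ V' minimizing w(u) + f(V') - f(V' - u), setting d̂(u) = f(V') - f(V' - u)), and let d*_w be the minimizer of ⟨w, d⟩ over the contrapolymatroid base polytope B_f given by Edmonds' greedy algorithm. Then ⟨w, d̂⟩ ≤ ⟨w, d*_w⟩ + n · Σ_{u ∈ V} f(u | V - u)², where n = |V| and f(u | A) = f(A ∪ {u}) - f(A). The additive error does not depend on w. -/
/-!
Let `x` lie in the base polytope and let `R k` be the set of vertices still present before step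
`k` of the peeling. The gap `D k = x(R k) - f(R k)` is nonnegative, vanishes for `k = 0` and
`k = n`, and is at most `E = Σ_u f(u | V - u)` by supermodularity. Since
`d̂(σ k) - x(σ k) = D (k + 1) - D k`, summation by parts turns `⟨w, d̂ - x⟩` into
`Σ_k (w(σ k) - w(σ (k + 1))) D (k + 1)`, and the greedy choice together with supermodularity
bounds `w(σ k) - w(σ (k + 1))` by `f(σ (k + 1) | V - σ (k + 1))`. Hence `⟨w, d̂ - x⟩ ≤ E²`,
and `E² ≤ n Σ_u f(u | V - u)²` by Cauchy–Schwarz.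
-/

open Finset

theorem sum_range_mul_sub_le {n : ℕ} {W c D : ℕ → ℝ} {E : ℝ} (hD0 : D 0 = 0) (hDn : D n = 0)
    (hD : ∀ k, 0 ≤ D k) (hDE : ∀ k, D k ≤ E) (hc : ∀ k, 0 ≤ c k)
    (hW : ∀ k, k + 1 < n → W k - W (k + 1) ≤ c (k + 1)) :
    ∑ k ∈ range n, W k * (D (k + 1) - D k) ≤ (∑ k ∈ range n, c k) * E := by
  have hparts : ∑ k ∈ range n, W k * (D (k + 1) - D k) =
      ∑ k ∈ range (n - 1), (W k - W (k + 1)) * D (k + 1) := by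
    have h := sum_range_by_parts W (fun k => D (k + 1) - D k) n
    simp only [smul_eq_mul, sum_range_sub, hD0, hDn, sub_zero, mul_zero, zero_sub] at h
    rw [h, ← sum_neg_distrib]
    exact sum_congr rfl fun k _ => by ring
  obtain _ | m := n
  · simp
  rw [hparts, sum_range_succ', add_mul, Nat.add_sub_cancel, sum_mul]
  calc ∑ k ∈ range m, (W k - W (k + 1)) * D (k + 1)
      ≤ ∑ k ∈ range m, c (k + 1) * E := sum_le_sum fun k hk =>
        (mul_le_mul_of_nonneg_right (hW k (by simp at hk; omega)) (hD _)).trans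
          (mul_le_mul_of_nonneg_left (hDE _) (hc _))
    _ ≤ ∑ k ∈ range m, c (k + 1) * E + c 0 * E :=
        le_add_of_nonneg_right (mul_nonneg (hc 0) ((hD 0).trans (hDE 0)))

theorem sum_fin_mul_sub_le {n : ℕ} {W c : Fin n → ℝ} {D : ℕ → ℝ} {E : ℝ} (hD0 : D 0 = 0)
    (hDn : D n = 0) (hD : ∀ k, 0 ≤ D k) (hDE : ∀ k, D k ≤ E) (hc : ∀ i, 0 ≤ c i)
    (hW : ∀ i j : Fin n, (j : ℕ) = i + 1 → W i - W j ≤ c j) :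
    ∑ i, W i * (D (i + 1) - D i) ≤ (∑ i, c i) * E := by
  set W' : ℕ → ℝ := Function.extend Fin.val W 0
  set c' : ℕ → ℝ := Function.extend Fin.val c 0
  have hW' (i : Fin n) : W' i = W i := Fin.val_injective.extend_apply _ _ i
  have hc' (i : Fin n) : c' i = c i := Fin.val_injective.extend_apply _ _ i
  have h := sum_range_mul_sub_le (W := W') (c := c') hD0 hDn hD hDE ?_ ?_
  · simpa only [← Fin.sum_univ_eq_sum_range, hW', hc'] using h
  · intro k
    by_cases hk : k < n
    · exact hc' ⟨k, hk⟩ ▸ hc ⟨k, hk⟩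
    · have hk' : ¬∃ i : Fin n, (i : ℕ) = k := fun ⟨i, hi⟩ => hk (hi ▸ i.isLt)
      simp only [c', Function.extend_apply' _ _ _ hk', Pi.zero_apply, le_refl]
  · intro k hk
    have h := hW ⟨k, by omega⟩ ⟨k + 1, hk⟩ rfl
    rwa [← hW', ← hW', ← hc'] at h

section Supermodular

variable {V : Type*} [DecidableEq V] {f : Finset V → ℝ}

theorem sub_sdiff_singleton_le_of_subset
    (hsup : ∀ A B : Finset V, f A + f B ≤ f (A ∪ B) + f (A ∩ B))
    {A B : Finset V} {u : V} (hAB : A ⊆ B) (hu : u ∈ A) :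
    f A - f (A \ {u}) ≤ f B - f (B \ {u}) := by
  have hunion : A ∪ B \ {u} = B := by
    ext v
    by_cases hv : v = u
    · subst hv; simp [hu, hAB hu]
    · simpa [hv] using fun h => hAB h
  have hinter : A ∩ (B \ {u}) = A \ {u} := by
    rw [← inter_sdiff_assoc, inter_eq_left.2 hAB]
  have h := hsup A (B \ {u})
  rw [hunion, hinter] at h
  linarith

variable [Fintype V]

theorem sub_univ_sdiff_le_sum
    (hsup : ∀ A B : Finset V, f A + f B ≤ f (A ∪ B) + f (A ∩ B)) (S : Finset V) :
    f univ - f (univ \ S) ≤ ∑ u ∈ S, (f univ - f (univ \ {u})) := by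
  induction S using Finset.induction_on with
  | empty => simp
  | @insert a S ha ih =>
    have h := sub_sdiff_singleton_le_of_subset hsup (subset_univ (univ \ S))
      (mem_sdiff.2 ⟨mem_univ a, ha⟩)
    rw [sum_insert ha, sdiff_insert, ← sdiff_singleton_eq_erase]
    linarith

theorem sum_sub_le_sum_of_mem_base
    (hsup : ∀ A B : Finset V, f A + f B ≤ f (A ∪ B) + f (A ∩ B)) {x : V → ℝ}
    (hx : ∀ S : Finset V, f S ≤ ∑ v ∈ S, x v) (hxV : ∑ v, x v = f univ) {S : Finset V}
    (hS : 0 ≤ f S) :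
    ∑ v ∈ S, x v - f S ≤ ∑ u ∈ S, (f univ - f (univ \ {u})) := by
  have hsplit := sum_sdiff (subset_univ S) (f := x)
  linarith [hx (univ \ S), sub_univ_sdiff_le_sum hsup S]

end Supermodular

section Peeling

variable {V : Type*} [DecidableEq V] {n : ℕ} (σ : Fin n ≃ V)

def remaining (i : ℕ) : Finset V := (univ.filter fun j : Fin n => i ≤ (j : ℕ)).image σ

variable {σ}

theorem mem_remaining {i : ℕ} {v : V} : v ∈ remaining σ i ↔ i ≤ σ.symm v := by
  simp only [remaining, mem_image, mem_filter, mem_univ, true_and]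
  exact ⟨fun ⟨j, hj, hjv⟩ => hjv ▸ by simpa using hj, fun h => ⟨σ.symm v, h, σ.apply_symm_apply v⟩⟩

theorem apply_mem_remaining {i : ℕ} {j : Fin n} (hij : i ≤ j) : σ j ∈ remaining σ i := by
  simpa [mem_remaining] using hij

theorem remaining_zero [Fintype V] : remaining σ 0 = univ := by
  ext v
  simp [mem_remaining]

theorem remaining_self : remaining σ n = ∅ := by
  ext v
  simp [mem_remaining, (σ.symm v).isLt]

theorem remaining_succ (i : Fin n) : remaining σ (i + 1) = (remaining σ i).erase (σ i) := by
  ext v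
  rw [mem_erase, mem_remaining, mem_remaining, Ne, ← σ.symm_apply_eq, Fin.ext_iff]
  omega

theorem sum_remaining_succ (g : V → ℝ) (i : Fin n) :
    ∑ v ∈ remaining σ i, g v = g (σ i) + ∑ v ∈ remaining σ (i + 1), g v := by
  rw [remaining_succ, add_sum_erase _ _ (apply_mem_remaining le_rfl)]

theorem weight_sub_le_of_greedy [Fintype V] {f : Finset V → ℝ} {w : V → ℝ}
    (hmono : ∀ A B : Finset V, A ⊆ B → f A ≤ f B)
    (hsup : ∀ A B : Finset V, f A + f B ≤ f (A ∪ B) + f (A ∩ B))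
    (hgreedy : ∀ i : Fin n, ∀ u ∈ remaining σ i,
      w (σ i) + (f (remaining σ i) - f (remaining σ i \ {σ i})) ≤
        w u + (f (remaining σ i) - f (remaining σ i \ {u})))
    {i j : Fin n} (hij : i ≤ j) :
    w (σ i) - w (σ j) ≤ f univ - f (univ \ {σ j}) := by
  have hj := apply_mem_remaining (σ := σ) (Fin.le_iff_val_le_val.1 hij)
  linarith [hgreedy i _ hj, hmono _ _ (sdiff_subset (s := remaining σ i) (t := {σ i})),
    sub_sdiff_singleton_le_of_subset hsup (subset_univ _) hj]

end Peeling

/-- The weighted super-greedy peeling for a normalized monotone supermodular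
function `f` produces a base `d̂` whose weighted cost exceeds the minimum
weighted cost over the contrapolymatroid base polytope by at most
`n · Σ_u f(u | V - u)²`, an additive error independent of `w`. -/
theorem stmt19 {V : Type*} [Fintype V] [DecidableEq V] {n : ℕ}
    (hn : Fintype.card V = n)
    (f : Finset V → ℝ) (hnorm : f ∅ = 0)
    (hmono : ∀ A B : Finset V, A ⊆ B → f A ≤ f B)
    (hsup : ∀ A B : Finset V, f A + f B ≤ f (A ∪ B) + f (A ∩ B))
    (w : V → ℝ) (σ : Fin n ≃ V) :
    -- `R i` is the set of vertices remaining just before step `i`; `σ i` is peeled at step `i`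
    let R : ℕ → Finset V := fun i => (Finset.univ.filter fun j : Fin n => i ≤ (j : ℕ)).image σ
    let marg : ℕ → V → ℝ := fun i u => f (R i) - f (R i \ {u})
    let dhat : V → ℝ := fun v => marg (σ.symm v) v
    -- greedy choice: the peeled vertex minimizes `w(u) + f(V') - f(V' - u)`
    (∀ i : Fin n, ∀ u ∈ R i, w (σ i) + marg i (σ i) ≤ w u + marg i u) →
    -- comparison with the minimizer over the contrapolymatroid base polytope
    ∀ x : V → ℝ, (∀ v : V, 0 ≤ x v) → (∀ S : Finset V, f S ≤ ∑ v ∈ S, x v) →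
      (∑ v, x v = f univ) →
      ∑ v, w v * dhat v ≤ ∑ v, w v * x v +
        (n : ℝ) * ∑ u, (f univ - f (univ \ {u})) ^ 2 := by
  intro R marg dhat hgreedy x _ hxS hxV
  set c : V → ℝ := fun u => f univ - f (univ \ {u})
  set D : ℕ → ℝ := fun k => ∑ v ∈ remaining σ k, x v - f (remaining σ k)
  have hf0 (S : Finset V) : 0 ≤ f S := hnorm ▸ hmono ∅ S (empty_subset S)
  have hc0 (u : V) : 0 ≤ c u := sub_nonneg.2 (hmono _ _ sdiff_subset)
  have hD (k : ℕ) : 0 ≤ D k := sub_nonneg.2 (hxS _)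
  have hDE (k : ℕ) : D k ≤ ∑ u, c u :=
    (sum_sub_le_sum_of_mem_base hsup hxS hxV (hf0 _)).trans
      (sum_le_sum_of_subset_of_nonneg (subset_univ _) fun u _ _ => hc0 u)
  have hcost : ∑ v, w v * dhat v - ∑ v, w v * x v = ∑ i : Fin n, w (σ i) * (D (i + 1) - D i) := by
    rw [← sum_sub_distrib, ← σ.sum_comp]
    refine sum_congr rfl fun i _ => ?_
    have hx := sum_remaining_succ (σ := σ) x i
    have hR : R = remaining σ := rfl
    simp only [D, dhat, marg, hR, σ.symm_apply_apply]
    rw [sdiff_singleton_eq_erase, ← remaining_succ, hx]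
    ring
  have hbound := sum_fin_mul_sub_le (W := w ∘ σ) (c := c ∘ σ)
    (by simp [D, remaining_zero, hxV]) (by simp [D, remaining_self, hnorm]) hD hDE
    (fun i => hc0 _) fun i j hij => weight_sub_le_of_greedy hmono hsup hgreedy (by omega)
  have hCS := sq_sum_le_card_mul_sum_sq (s := univ) (f := c)
  rw [card_univ, hn] at hCS
  simp only [Function.comp_apply, σ.sum_comp c] at hbound
  nlinarith
end
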